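/- arXiv:2601.22042 — 6 statements merged into one kernel-verified Lean document; each statement's English description precedes it below -/
import Mathlib

section
/- Let ABCD be an isosceles tetrahedron and let O be its circumcenter, i.e. the unique point equidistant from A, B, C, D. Then the distances from O to the four face planes of ABCD are all equal; that is, the circumcenter of an isosceles tetrahedron coincides with its incenter. -/
open EuclideanGeometry Metric RealInnerProductSpace

noncomputable section

abbrev Pt := EuclideanSpace ℝ (Fin 3)

lemma polar (x y z : Pt) :
    ⟪x - z, y - z⟫ = ((dist x z)^2 + (dist y z)^2 - (dist x y)^2)/2 := by
  rw [dist_eq_norm, dist_eq_norm, dist_eq_norm]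
  have h := norm_sub_sq_real (x - z) (y - z)
  rw [sub_sub_sub_cancel_right] at h
  have h1 := norm_nonneg (x - z)
  linarith [sq_nonneg ‖x - y‖]

lemma exists_isom (P Q : Fin 4 → Pt) (hP : AffineIndependent ℝ P)
    (hd : ∀ i j, dist (P i) (P j) = dist (Q i) (Q j)) :
    ∃ f : Pt →ᵃⁱ[ℝ] Pt, ∀ i, f (P i) = Q i := by
  have li : LinearIndependent ℝ (fun i : {x : Fin 4 // x ≠ 0} => P ↑i -ᵥ P 0) :=
    (affineIndependent_iff_linearIndependent_vsub ℝ P 0).mp hP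
  haveI : Nonempty {x : Fin 4 // x ≠ 0} := ⟨⟨1, by decide⟩⟩
  have hc : Fintype.card {x : Fin 4 // x ≠ 0} = Module.finrank ℝ Pt := by
    simp [Fintype.card_subtype_compl, finrank_euclideanSpace]
  let b := basisOfLinearIndependentOfCardEqFinrank li hc
  have hb : ∀ i, b i = P ↑i -ᵥ P 0 := fun i => by
    rw [coe_basisOfLinearIndependentOfCardEqFinrank]
  let L : Pt →ₗ[ℝ] Pt := b.constr ℝ (fun i => Q ↑i -ᵥ Q 0)
  have hL : ∀ i, L (b i) = Q ↑i -ᵥ Q 0 := fun i => b.constr_basis ℝ _ i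
  have hinner : ∀ u v : Pt, ⟪L u, L v⟫ = ⟪u, v⟫ := by
    have hB : (innerₛₗ ℝ (E := Pt)).compl₁₂ L L = innerₛₗ ℝ (E := Pt) := by
      apply LinearMap.ext_basis b b
      intro i j
      simp only [LinearMap.compl₁₂_apply, innerₛₗ_apply_apply]
      rw [hL i, hL j, hb i, hb j]
      have h1 : (P ↑i -ᵥ P 0 : Pt) = P ↑i - P 0 := rfl
      have h2 : (P ↑j -ᵥ P 0 : Pt) = P ↑j - P 0 := rfl
      have h3 : (Q ↑i -ᵥ Q 0 : Pt) = Q ↑i - Q 0 := rfl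
      have h4 : (Q ↑j -ᵥ Q 0 : Pt) = Q ↑j - Q 0 := rfl
      show (inner ℝ (Q ↑i -ᵥ Q 0) (Q ↑j -ᵥ Q 0) : ℝ) = inner ℝ (P ↑i -ᵥ P 0) (P ↑j -ᵥ P 0)
      rw [h1, h2, h3, h4, polar, polar, hd, hd, hd]
    intro u v
    exact congrArg (fun g : Pt →ₗ[ℝ] Pt →ₗ[ℝ] ℝ => g u v) hB
  have hnorm : ∀ u : Pt, ‖L u‖ = ‖u‖ := by
    intro u
    rw [norm_eq_sqrt_real_inner, norm_eq_sqrt_real_inner, hinner]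
  let LL : Pt →ₗᵢ[ℝ] Pt := ⟨L, hnorm⟩
  let f : Pt →ᵃⁱ[ℝ] Pt :=
    ((AffineIsometryEquiv.vaddConst ℝ (Q 0)).toAffineIsometry.comp
      (LL.toAffineIsometry.comp
        (AffineIsometryEquiv.vaddConst ℝ (P 0)).symm.toAffineIsometry))
  have hfx : ∀ x, f x = L (x -ᵥ P 0) +ᵥ Q 0 := fun x => rfl
  refine ⟨f, fun i => ?_⟩
  rcases eq_or_ne i 0 with h | h
  · subst h; rw [hfx]; simp
  · rw [hfx]
    have : (P i -ᵥ P 0 : Pt) = b ⟨i, h⟩ := (hb ⟨i, h⟩).symm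
    rw [this, hL]
    simp

lemma infDist_eq_of (P Q : Fin 4 → Pt) (O : Pt) (hP : AffineIndependent ℝ P)
    (hd : ∀ i j, dist (P i) (P j) = dist (Q i) (Q j))
    (hrange : ∀ i, ∃ j, P i = Q j)
    (hO : ∀ i, dist O (P i) = dist O (P 0)) :
    Metric.infDist O (affineSpan ℝ ({P 1, P 2, P 3} : Set Pt) : Set Pt)
      = Metric.infDist O (affineSpan ℝ ({Q 1, Q 2, Q 3} : Set Pt) : Set Pt) := by
  obtain ⟨f, hf⟩ := exists_isom P Q hP hd
  let S : Affine.Simplex ℝ Pt 3 := ⟨P, hP⟩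
  have hspan : affineSpan ℝ (Set.range P) = ⊤ := by
    rw [hP.affineSpan_eq_top_iff_card_eq_finrank_add_one]
    simp [finrank_euclideanSpace]
  have hmem : ∀ p : Pt, p ∈ affineSpan ℝ (Set.range S.points) := by
    intro p; show p ∈ affineSpan ℝ (Set.range P); rw [hspan]; trivial
  have h1 : O = S.circumcenter := S.eq_circumcenter_of_dist_eq (hmem O) (fun i => by rw [dist_comm]; exact hO i)
  have h2 : f O = S.circumcenter := by
    refine S.eq_circumcenter_of_dist_eq (r := dist O (P 0)) (hmem _) (fun i => ?_)
    obtain ⟨j, hj⟩ := hrange i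
    show dist (P i) (f O) = dist O (P 0)
    rw [dist_comm, hj, ← hf j, f.dist_map, hO j]
  have hfO : f O = O := by rw [h2, ← h1]
  have himg : f '' (affineSpan ℝ ({P 1, P 2, P 3} : Set Pt) : Set Pt)
      = (affineSpan ℝ ({Q 1, Q 2, Q 3} : Set Pt) : Set Pt) := by
    have h3 : ⇑f.toAffineMap '' ({P 1, P 2, P 3} : Set Pt) = {Q 1, Q 2, Q 3} := by
      simp only [Set.image_insert_eq, Set.image_singleton]
      have e1 : f.toAffineMap (P 1) = Q 1 := hf 1
      have e2 : f.toAffineMap (P 2) = Q 2 := hf 2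
      have e3 : f.toAffineMap (P 3) = Q 3 := hf 3
      rw [e1, e2, e3]
    rw [show (⇑f : Pt → Pt) = ⇑f.toAffineMap from rfl, ← AffineSubspace.coe_map,
      AffineSubspace.map_span, h3]
  conv_rhs => rw [← himg, ← hfO]
  rw [Metric.infDist_image f.isometry]


lemma indep_perm (A B C D : Pt) (h : AffineIndependent ℝ ![A,B,C,D])
    (P : Fin 4 → Pt) (e : Equiv.Perm (Fin 4)) (he : ∀ i, P i = ![A,B,C,D] (e i)) :
    AffineIndependent ℝ P := by
  have h2 := h.comp_embedding e.toEmbedding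
  convert h2 using 1
  funext i
  exact he i

/-- In an isosceles tetrahedron `ABCD`, the circumcenter `O` (the point equidistant from
all four vertices) is equidistant from the four face planes; i.e. it coincides with the
incenter. -/
theorem isosceles_tetrahedron_circumcenter_eq_incenter
    (A B C D O : Pt) (hindep : AffineIndependent ℝ ![A, B, C, D])
    (h₁ : dist A B = dist C D) (h₂ : dist B C = dist A D) (h₃ : dist A C = dist B D)
    (hOA : dist O A = dist O B) (hOB : dist O A = dist O C) (hOC : dist O A = dist O D) :
    Metric.infDist O (affineSpan ℝ ({B, C, D} : Set Pt) : Set Pt)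
      = Metric.infDist O (affineSpan ℝ ({A, C, D} : Set Pt) : Set Pt) ∧
    Metric.infDist O (affineSpan ℝ ({A, C, D} : Set Pt) : Set Pt)
      = Metric.infDist O (affineSpan ℝ ({A, B, D} : Set Pt) : Set Pt) ∧
    Metric.infDist O (affineSpan ℝ ({A, B, D} : Set Pt) : Set Pt)
      = Metric.infDist O (affineSpan ℝ ({A, B, C} : Set Pt) : Set Pt) := by
  have hind2 : AffineIndependent ℝ ![B,A,C,D] := by
    refine indep_perm A B C D hindep _ (Equiv.swap 0 1) (fun i => ?_)
    fin_cases i <;> rfl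
  have hind3 : AffineIndependent ℝ ![C,A,B,D] := by
    refine indep_perm A B C D hindep _
      ⟨(![2,0,1,3] : Fin 4 → Fin 4), (![1,2,0,3] : Fin 4 → Fin 4), by decide, by decide⟩
      (fun i => ?_)
    fin_cases i <;> rfl
  have e1 : Metric.infDist O (affineSpan ℝ ({B, C, D} : Set Pt) : Set Pt)
      = Metric.infDist O (affineSpan ℝ ({A, D, C} : Set Pt) : Set Pt) := by
    refine infDist_eq_of ![A,B,C,D] ![B,A,D,C] O hindep ?_ ?_ ?_
    · intro i j; fin_cases i <;> fin_cases j <;> simp_all [dist_comm]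
    · intro i; fin_cases i
      exacts [⟨1, rfl⟩, ⟨0, rfl⟩, ⟨3, rfl⟩, ⟨2, rfl⟩]
    · intro i; fin_cases i <;> simp <;> linarith
  have e2 : Metric.infDist O (affineSpan ℝ ({A, C, D} : Set Pt) : Set Pt)
      = Metric.infDist O (affineSpan ℝ ({D, B, A} : Set Pt) : Set Pt) := by
    refine infDist_eq_of ![B,A,C,D] ![C,D,B,A] O hind2 ?_ ?_ ?_
    · intro i j; fin_cases i <;> fin_cases j <;> simp_all [dist_comm]
    · intro i; fin_cases i
      exacts [⟨2, rfl⟩, ⟨3, rfl⟩, ⟨0, rfl⟩, ⟨1, rfl⟩]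
    · intro i; fin_cases i <;> simp <;> linarith
  have e3 : Metric.infDist O (affineSpan ℝ ({A, B, D} : Set Pt) : Set Pt)
      = Metric.infDist O (affineSpan ℝ ({B, A, C} : Set Pt) : Set Pt) := by
    refine infDist_eq_of ![C,A,B,D] ![D,B,A,C] O hind3 ?_ ?_ ?_
    · intro i j; fin_cases i <;> fin_cases j <;> simp_all [dist_comm]
    · intro i; fin_cases i
      exacts [⟨3, rfl⟩, ⟨2, rfl⟩, ⟨1, rfl⟩, ⟨0, rfl⟩]
    · intro i; fin_cases i <;> simp <;> linarith
  have s1 : ({A, D, C} : Set Pt) = {A, C, D} := by ext x; simp; tauto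
  have s2 : ({D, B, A} : Set Pt) = {A, B, D} := by ext x; simp; tauto
  have s3 : ({B, A, C} : Set Pt) = {A, B, C} := by ext x; simp; tauto
  rw [s1] at e1; rw [s2] at e2; rw [s3] at e3
  exact ⟨e1, e2, e3⟩

end
end

section
/- Let ABCD be an isosceles tetrahedron. Then every face of ABCD is an acute triangle: for any three pairwise distinct vertices X, Y, Z of ABCD, the unsigned angle ∠XYZ is strictly less than π/2. -/
open EuclideanGeometry

noncomputable section

lemma key (A B C D : Pt) (hm : A + C ≠ B + D)
    (h₁ : dist A B = dist C D) (h₂ : dist B C = dist A D) (h₃ : dist A C = dist B D) :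
    EuclideanGeometry.angle A B C < Real.pi / 2 := by
  set a := A - B with ha
  set c := C - B with hc
  set d := D - B with hd
  have h1 : ‖a‖ ^ 2 = ‖c - d‖ ^ 2 := by
    rw [ha, hc, hd, sub_sub_sub_cancel_right]
    rw [dist_eq_norm, dist_eq_norm] at h₁; rw [h₁]
  have h2 : ‖c‖ ^ 2 = ‖a - d‖ ^ 2 := by
    rw [ha, hc, hd, sub_sub_sub_cancel_right]
    rw [dist_eq_norm, dist_eq_norm] at h₂
    rw [← norm_neg (C - B), neg_sub, h₂]
  have h3 : ‖a - c‖ ^ 2 = ‖d‖ ^ 2 := by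
    rw [ha, hc, hd, sub_sub_sub_cancel_right]
    rw [dist_eq_norm, dist_eq_norm] at h₃
    rw [← norm_neg (D - B), neg_sub, h₃]
  have hne : a + c - d ≠ 0 := by
    rw [ha, hc, hd]
    intro h
    apply hm
    have h' : A + C - (B + D) = 0 := by
      rw [show A + C - (B + D) = A - B + (C - B) - (D - B) by abel, h]
    exact sub_eq_zero.mp h'
  have hpos : (0:ℝ) < ‖a + c - d‖ ^ 2 := pow_pos (norm_pos_iff.mpr hne) 2
  have E1 : ‖c - d‖ ^ 2 = ‖c‖ ^ 2 - 2 * inner ℝ c d + ‖d‖ ^ 2 := norm_sub_sq_real c d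
  have E2 : ‖a - d‖ ^ 2 = ‖a‖ ^ 2 - 2 * inner ℝ a d + ‖d‖ ^ 2 := norm_sub_sq_real a d
  have E3 : ‖a - c‖ ^ 2 = ‖a‖ ^ 2 - 2 * inner ℝ a c + ‖c‖ ^ 2 := norm_sub_sq_real a c
  have E4 : ‖a + c - d‖ ^ 2 = ‖a + c‖ ^ 2 - 2 * inner ℝ (a + c) d + ‖d‖ ^ 2 :=
    norm_sub_sq_real (a + c) d
  have E5 : ‖a + c‖ ^ 2 = ‖a‖ ^ 2 + 2 * inner ℝ a c + ‖c‖ ^ 2 := norm_add_sq_real a c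
  have E6 : (inner ℝ (a + c) d : ℝ) = inner ℝ a d + inner ℝ c d := inner_add_left a c d
  have hinner : (0:ℝ) < inner ℝ a c := by nlinarith
  have hA : a ≠ 0 := by intro h; rw [h] at hinner; simp at hinner
  have hC : c ≠ 0 := by intro h; rw [h] at hinner; simp at hinner
  rw [EuclideanGeometry.angle, show A -ᵥ B = a from rfl, show C -ᵥ B = c from rfl,
    InnerProductGeometry.angle]
  exact Real.arccos_lt_pi_div_two.mpr
    (div_pos hinner (mul_pos (norm_pos_iff.mpr hA) (norm_pos_iff.mpr hC)))

lemma indep_ne₁ (A B C D : Pt) (h : AffineIndependent ℝ ![A, B, C, D]) : A + C ≠ B + D := by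
  intro he
  have key := affineIndependent_iff.mp h Finset.univ ![1, -1, 1, -1]
    (by simp [Fin.sum_univ_four])
    (by
      simp [Fin.sum_univ_four]
      rw [show A + -B + C + -D = A + C - (B + D) by abel]
      exact sub_eq_zero.mpr he) 0 (Finset.mem_univ 0)
  norm_num at key

lemma indep_ne₂ (A B C D : Pt) (h : AffineIndependent ℝ ![A, B, C, D]) : A + B ≠ C + D := by
  intro he
  have key := affineIndependent_iff.mp h Finset.univ ![1, 1, -1, -1]
    (by simp [Fin.sum_univ_four])
    (by
      simp [Fin.sum_univ_four]
      rw [show A + B + -C + -D = A + B - (C + D) by abel]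
      exact sub_eq_zero.mpr he) 0 (Finset.mem_univ 0)
  norm_num at key

lemma indep_ne₃ (A B C D : Pt) (h : AffineIndependent ℝ ![A, B, C, D]) : A + D ≠ B + C := by
  intro he
  have key := affineIndependent_iff.mp h Finset.univ ![1, -1, -1, 1]
    (by simp [Fin.sum_univ_four])
    (by
      simp [Fin.sum_univ_four]
      rw [show A + -B + -C + D = A + D - (B + C) by abel]
      exact sub_eq_zero.mpr he) 0 (Finset.mem_univ 0)
  norm_num at key

/-- Every face of an isosceles tetrahedron is an acute triangle: for any three pairwise
distinct vertices `X, Y, Z`, the unsigned angle `∠ X Y Z` is strictly less than `π / 2`. -/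
theorem isosceles_tetrahedron_faces_acute
    (A B C D : Pt) (hindep : AffineIndependent ℝ ![A, B, C, D])
    (h₁ : dist A B = dist C D) (h₂ : dist B C = dist A D) (h₃ : dist A C = dist B D)
    (X Y Z : Pt) (hX : X ∈ ({A, B, C, D} : Set Pt)) (hY : Y ∈ ({A, B, C, D} : Set Pt))
    (hZ : Z ∈ ({A, B, C, D} : Set Pt))
    (hXY : X ≠ Y) (hYZ : Y ≠ Z) (hXZ : X ≠ Z) :
    EuclideanGeometry.angle X Y Z < Real.pi / 2 := by
  have n1 := indep_ne₁ A B C D hindep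
  have n2 := indep_ne₂ A B C D hindep
  have n3 := indep_ne₃ A B C D hindep
  have mBADC : B + A ≠ D + C := by rw [add_comm B A, add_comm D C]; exact n2
  have mADCB : A + D ≠ C + B := by rw [add_comm C B]; exact n3
  have mABDC : A + B ≠ D + C := by rw [add_comm D C]; exact n2
  have mDCBA : D + C ≠ B + A := by rw [add_comm D C, add_comm B A]; exact n2.symm
  have mCABD : C + A ≠ B + D := by rw [add_comm C A]; exact n1
  have mCBAD : C + B ≠ A + D := by rw [add_comm C B]; exact n3.symm
  have mBACD : B + A ≠ C + D := by rw [add_comm B A]; exact n2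
  have mBCDA : B + C ≠ D + A := by rw [add_comm D A]; exact n3.symm
  have mCADB : C + A ≠ D + B := by rw [add_comm C A, add_comm D B]; exact n1
  have mACBD : A + C ≠ B + D := n1
  have mDABC : D + A ≠ B + C := by rw [add_comm D A]; exact n3
  have mABCD : A + B ≠ C + D := n2
  have mBDCA : B + D ≠ C + A := by rw [add_comm C A]; exact n1.symm
  have mACDB : A + C ≠ D + B := by rw [add_comm D B]; exact n1
  have mCDAB : C + D ≠ A + B := n2.symm
  have mBDAC : B + D ≠ A + C := n1.symm
  have mDACB : D + A ≠ C + B := by rw [add_comm D A, add_comm C B]; exact n3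
  have mDCAB : D + C ≠ A + B := by rw [add_comm D C]; exact n2.symm
  have mADBC : A + D ≠ B + C := n3
  have mBCAD : B + C ≠ A + D := n3.symm
  have mDBCA : D + B ≠ C + A := by rw [add_comm D B, add_comm C A]; exact n1.symm
  have mCBDA : C + B ≠ D + A := by rw [add_comm C B, add_comm D A]; exact n3.symm
  have mDBAC : D + B ≠ A + C := by rw [add_comm D B]; exact n1.symm
  have mCDBA : C + D ≠ B + A := by rw [add_comm B A]; exact n2.symm
  have dABCD : dist A B = dist C D := h₁
  have dBCAD : dist B C = dist A D := h₂
  have dACBD : dist A C = dist B D := h₃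
  have dABDC : dist A B = dist D C := by rw [dist_comm D C]; exact h₁
  have dBDAC : dist B D = dist A C := h₃.symm
  have dADBC : dist A D = dist B C := h₂.symm
  have dCBAD : dist C B = dist A D := by rw [dist_comm C B]; exact h₂
  have dACDB : dist A C = dist D B := by rw [dist_comm D B]; exact h₃
  have dCDAB : dist C D = dist A B := h₁.symm
  have dADCB : dist A D = dist C B := by rw [dist_comm C B]; exact h₂.symm
  have dDBAC : dist D B = dist A C := by rw [dist_comm D B]; exact h₃.symm
  have dDCAB : dist D C = dist A B := by rw [dist_comm D C]; exact h₁.symm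
  have dBACD : dist B A = dist C D := by rw [dist_comm B A]; exact h₁
  have dBADC : dist B A = dist D C := by rw [dist_comm B A, dist_comm D C]; exact h₁
  have dCABD : dist C A = dist B D := by rw [dist_comm C A]; exact h₃
  have dBCDA : dist B C = dist D A := by rw [dist_comm D A]; exact h₂
  have dCDBA : dist C D = dist B A := by rw [dist_comm B A]; exact h₁.symm
  have dBDCA : dist B D = dist C A := by rw [dist_comm C A]; exact h₃.symm
  have dDABC : dist D A = dist B C := by rw [dist_comm D A]; exact h₂.symm
  have dDCBA : dist D C = dist B A := by rw [dist_comm D C, dist_comm B A]; exact h₁.symm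
  have dCADB : dist C A = dist D B := by rw [dist_comm C A, dist_comm D B]; exact h₃
  have dCBDA : dist C B = dist D A := by rw [dist_comm C B, dist_comm D A]; exact h₂
  have dDACB : dist D A = dist C B := by rw [dist_comm D A, dist_comm C B]; exact h₂.symm
  have dDBCA : dist D B = dist C A := by rw [dist_comm D B, dist_comm C A]; exact h₃.symm
  simp only [Set.mem_insert_iff, Set.mem_singleton_iff] at hX hY hZ
  rcases hX with rfl | rfl | rfl | rfl
  · rcases hY with rfl | rfl | rfl | rfl
    · exact absurd rfl hXY
    · rcases hZ with rfl | rfl | rfl | rfl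
      · exact absurd rfl hXZ
      · exact absurd rfl hYZ
      · exact key X Y Z D mACBD dABCD dBCAD dACBD
      · exact key X Y Z C mADBC dABDC dBDAC dADBC
    · rcases hZ with rfl | rfl | rfl | rfl
      · exact absurd rfl hXZ
      · exact key X Y Z D mABCD dACBD dCBAD dABCD
      · exact absurd rfl hYZ
      · exact key X Y Z B mADCB dACDB dCDAB dADCB
    · rcases hZ with rfl | rfl | rfl | rfl
      · exact absurd rfl hXZ
      · exact key X Y Z C mABDC dADBC dDBAC dABDC
      · exact key X Y Z B mACDB dADCB dDCAB dACDB
      · exact absurd rfl hYZ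
  · rcases hY with rfl | rfl | rfl | rfl
    · rcases hZ with rfl | rfl | rfl | rfl
      · exact absurd rfl hYZ
      · exact absurd rfl hXZ
      · exact key X Y Z D mBCAD dBACD dACBD dBCAD
      · exact key X Y Z C mBDAC dBADC dADBC dBDAC
    · exact absurd rfl hXY
    · rcases hZ with rfl | rfl | rfl | rfl
      · exact key X Y Z D mBACD dBCAD dCABD dBACD
      · exact absurd rfl hXZ
      · exact absurd rfl hYZ
      · exact key X Y Z A mBDCA dBCDA dCDBA dBDCA
    · rcases hZ with rfl | rfl | rfl | rfl
      · exact key X Y Z C mBADC dBDAC dDABC dBADC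
      · exact absurd rfl hXZ
      · exact key X Y Z A mBCDA dBDCA dDCBA dBCDA
      · exact absurd rfl hYZ
  · rcases hY with rfl | rfl | rfl | rfl
    · rcases hZ with rfl | rfl | rfl | rfl
      · exact absurd rfl hYZ
      · exact key X Y Z D mCBAD dCABD dABCD dCBAD
      · exact absurd rfl hXZ
      · exact key X Y Z B mCDAB dCADB dADCB dCDAB
    · rcases hZ with rfl | rfl | rfl | rfl
      · exact key X Y Z D mCABD dCBAD dBACD dCABD
      · exact absurd rfl hYZ
      · exact absurd rfl hXZ
      · exact key X Y Z A mCDBA dCBDA dBDCA dCDBA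
    · exact absurd rfl hXY
    · rcases hZ with rfl | rfl | rfl | rfl
      · exact key X Y Z B mCADB dCDAB dDACB dCADB
      · exact key X Y Z A mCBDA dCDBA dDBCA dCBDA
      · exact absurd rfl hXZ
      · exact absurd rfl hYZ
  · rcases hY with rfl | rfl | rfl | rfl
    · rcases hZ with rfl | rfl | rfl | rfl
      · exact absurd rfl hYZ
      · exact key X Y Z C mDBAC dDABC dABDC dDBAC
      · exact key X Y Z B mDCAB dDACB dACDB dDCAB
      · exact absurd rfl hXZ
    · rcases hZ with rfl | rfl | rfl | rfl
      · exact key X Y Z C mDABC dDBAC dBADC dDABC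
      · exact absurd rfl hYZ
      · exact key X Y Z A mDCBA dDBCA dBCDA dDCBA
      · exact absurd rfl hXZ
    · rcases hZ with rfl | rfl | rfl | rfl
      · exact key X Y Z B mDACB dDCAB dCADB dDACB
      · exact key X Y Z A mDBCA dDCBA dCBDA dDBCA
      · exact absurd rfl hYZ
      · exact absurd rfl hXZ
    · exact absurd rfl hXY


end
end

section
/- Let ABCD be a tetrahedron and let P and Q be points lying on none of the four face planes of ABCD such that Q is an isogonal conjugate of P with respect to ABCD. Then the midpoint M of the segment PQ is equidistant from the eight orthogonal projections of P and of Q onto the four face planes; that is, all eight projections lie on a single sphere (the common pedal sphere of P and Q) centered at M. -/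
open EuclideanGeometry
open scoped RealInnerProductSpace

noncomputable section

/-- The unit vector in the direction of `v` (junk value `0` if `v = 0`). -/
def unitv (v : Pt) : Pt := ‖v‖⁻¹ • v

/-- The unit vector in the direction of the component of `v` orthogonal to the
unit vector `u`. -/
def orthUnit (v u : Pt) : Pt := unitv (v - ⟪v, u⟫ • u)

/-- The internal bisector plane of tetrahedron `XYZW` along the edge `XY`:
the affine plane through `X` whose direction is spanned by the unit vector `u` along
`Y - X` and the sum of the unit vectors along the components of `Z - X` and `W - X`
orthogonal to `u`. -/
def bisectorPlane (X Y Z W : Pt) : AffineSubspace ℝ Pt :=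
  AffineSubspace.mk' X (Submodule.span ℝ
    {unitv (Y - X), orthUnit (Z - X) (unitv (Y - X)) + orthUnit (W - X) (unitv (Y - X))})

/-- Reflection of `ℝ³` in the internal bisector plane along edge `XY`
(with `Z`, `W` the two remaining vertices). -/
def edgeReflect (X Y Z W : Pt) : Pt ≃ᵃⁱ[ℝ] Pt :=
  haveI : Nonempty (bisectorPlane X Y Z W) := ⟨⟨X, AffineSubspace.self_mem_mk' _ _⟩⟩
  EuclideanGeometry.reflection (bisectorPlane X Y Z W)

/-- `Q` lies in the image of the plane through `X, Y, P` under the reflection of `ℝ³`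
in the internal bisector plane along the edge `XY` (remaining vertices `Z`, `W`). -/
def IsogCond (X Y Z W P Q : Pt) : Prop :=
  Q ∈ ⇑(edgeReflect X Y Z W) '' (affineSpan ℝ ({X, Y, P} : Set Pt) : Set Pt)

/-- `Q` is an isogonal conjugate of `P` with respect to the tetrahedron `ABCD`:
for each of the six edges `XY`, `Q` lies in the image of the plane through `X, Y, P`
under the reflection in the internal bisector plane along `XY`. -/
def IsIsogonalConjugate (A B C D P Q : Pt) : Prop :=
  IsogCond A B C D P Q ∧ IsogCond A C B D P Q ∧ IsogCond A D B C P Q ∧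
  IsogCond B C A D P Q ∧ IsogCond B D A C P Q ∧ IsogCond C D A B P Q

/-- Orthogonal projection of `P` onto the affine plane spanned by `X, Y, Z`. -/
def faceProj (X Y Z P : Pt) : Pt :=
  haveI : Nonempty (affineSpan ℝ ({X, Y, Z} : Set Pt)) :=
    ⟨⟨X, subset_affineSpan ℝ _ (by simp)⟩⟩
  (EuclideanGeometry.orthogonalProjection (affineSpan ℝ ({X, Y, Z} : Set Pt)) P : Pt)

/-!
For a face plane `F` with orthogonal projection `π` and the midpoint `M` of `PQ`, Pythagoras gives
`|M - π P|² = |M - π Q|² = |PQ|² / 4 + ⟪P - π P, Q - π Q⟫`, so it suffices that the last term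
(the product of the signed distances of `P` and `Q` to `F`) is the same for all four faces.

Along an edge `XY`, the reflection `σ` in the bisector plane exchanges the two faces `F₁`, `F₂`
through `XY`, hence intertwines their normal parts `Nᵢ t = t - πᵢ t`: `N₁ (σ t) = σ (N₂ t)`.
If `Q = σ s` with `s` in the plane `XYP`, then `Nᵢ s = b • Nᵢ P` for one scalar `b`, and since
the linear part of `σ` is self-adjoint, `⟪N₁ P, N₁ Q⟫ = b ⟪N₁ P, σ N₂ P⟫ = ⟪N₂ P, N₂ Q⟫`.
The edges `AB`, `AC`, `BC` link all four faces.
-/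

lemma exists_eq_smul_vsub_vadd_of_mem_affineSpan_triple {k V P : Type*} [Ring k]
    [AddCommGroup V] [Module k V] [AddTorsor V P] {x y p t : P} (ht : t ∈ affineSpan k {x, y, p}) :
    ∃ r : k, ∃ p₀ ∈ line[k, x, y], t = r • (p -ᵥ x) +ᵥ p₀ := by
  rwa [Set.pair_comm y p, Set.insert_comm x p, ← affineSpan_insert_affineSpan,
    AffineSubspace.mem_affineSpan_insert_iff (left_mem_affineSpan_pair k x y)] at ht

lemma Submodule.mem_orthogonal_span_pair {E : Type*} [NormedAddCommGroup E]
    [InnerProductSpace ℝ E] {a b v : E} :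
    v ∈ (span ℝ {a, b})ᗮ ↔ ⟪a, v⟫ = 0 ∧ ⟪b, v⟫ = 0 := by
  rw [span_insert, ← inf_orthogonal, mem_inf, mem_orthogonal_singleton_iff_inner_right,
    mem_orthogonal_singleton_iff_inner_right]

lemma Submodule.inner_reflection_left {E : Type*} [NormedAddCommGroup E]
    [InnerProductSpace ℝ E] (K : Submodule ℝ E) [K.HasOrthogonalProjection] (v w : E) :
    ⟪K.reflection v, w⟫ = ⟪v, K.reflection w⟫ := by
  rw [LinearIsometryEquiv.inner_map_eq_flip, reflection_symm]

namespace EuclideanGeometry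

variable {V P : Type*} [NormedAddCommGroup V] [InnerProductSpace ℝ V] [MetricSpace P]
  [NormedAddTorsor V P]

lemma dist_midpoint_orthogonalProjection_sq (s : AffineSubspace ℝ P) [Nonempty s]
    [s.direction.HasOrthogonalProjection] (p q : P) :
    dist (midpoint ℝ p q) (orthogonalProjection s p) ^ 2 =
      dist p q ^ 2 / 4 + ⟪p -ᵥ orthogonalProjection s p, q -ᵥ orthogonalProjection s q⟫ := by
  set a := p -ᵥ (orthogonalProjection s p : P)
  set b := q -ᵥ (orthogonalProjection s q : P)
  set d := (orthogonalProjection s q : P) -ᵥ orthogonalProjection s p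
  have hd : d ∈ s.direction := AffineSubspace.vsub_mem_direction (orthogonalProjection_mem _)
    (orthogonalProjection_mem _)
  have had : ⟪a, d⟫ = 0 := Submodule.inner_left_of_mem_orthogonal hd
    (vsub_orthogonalProjection_mem_direction_orthogonal s p)
  have hbd : ⟪b, d⟫ = 0 := Submodule.inner_left_of_mem_orthogonal hd
    (vsub_orthogonalProjection_mem_direction_orthogonal s q)
  have hm : midpoint ℝ p q -ᵥ (orthogonalProjection s p : P) = (2⁻¹ : ℝ) • (a + b + d) := by
    rw [midpoint_vsub, ← vsub_add_vsub_cancel q (orthogonalProjection s q : P), invOf_eq_inv]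
    module
  have hpq : p -ᵥ q = a - b - d := by
    rw [sub_sub, vsub_add_vsub_cancel, vsub_sub_vsub_cancel_right]
  rw [dist_eq_norm_vsub V, hm, dist_eq_norm_vsub V, hpq, ← real_inner_self_eq_norm_sq,
    ← real_inner_self_eq_norm_sq]
  simp only [inner_add_left, inner_add_right, inner_sub_left, inner_sub_right,
    real_inner_smul_left, real_inner_smul_right, real_inner_comm a d, real_inner_comm b d,
    real_inner_comm a b, had, hbd]
  ring

lemma reflection_eq_of_midpoint_mem {s : AffineSubspace ℝ P} [Nonempty s]
    [s.direction.HasOrthogonalProjection] {p q : P} (hm : midpoint ℝ p q ∈ s)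
    (hpq : q -ᵥ p ∈ s.directionᗮ) : reflection s p = q := by
  have hproj : (orthogonalProjection s p : P) = midpoint ℝ p q := by
    rw [coe_orthogonalProjection_eq_iff_mem]
    refine ⟨hm, ?_⟩
    rw [left_vsub_midpoint, ← neg_vsub_eq_vsub_rev]
    exact Submodule.smul_mem _ _ (Submodule.neg_mem _ hpq)
  rw [reflection_apply', hproj, midpoint_vsub_left, eq_comm, eq_vadd_iff_vsub_eq,
    right_vsub_midpoint]

lemma vsub_orthogonalProjection_smul_vsub_vadd {s : AffineSubspace ℝ P} [Nonempty s]
    [s.direction.HasOrthogonalProjection] {x p₀ : P} (hx : x ∈ s) (hp₀ : p₀ ∈ s) (r : ℝ)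
    (p : P) :
    (r • (p -ᵥ x) +ᵥ p₀) -ᵥ orthogonalProjection s (r • (p -ᵥ x) +ᵥ p₀) =
      r • (p -ᵥ orthogonalProjection s p) := by
  have hproj : (orthogonalProjection s (r • (p -ᵥ x) +ᵥ p₀) : P) =
      r • ((orthogonalProjection s p : P) -ᵥ x) +ᵥ p₀ := by
    rw [coe_orthogonalProjection_eq_iff_mem]
    refine ⟨AffineSubspace.vadd_mem_of_mem_direction (Submodule.smul_mem _ _
      (AffineSubspace.vsub_mem_direction (orthogonalProjection_mem p) hx)) hp₀, ?_⟩
    rw [vadd_vsub_vadd_cancel_right, ← smul_sub, vsub_sub_vsub_cancel_right]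
    exact Submodule.smul_mem _ _ (vsub_orthogonalProjection_mem_direction_orthogonal s p)
  rw [hproj, vadd_vsub_vadd_cancel_right, ← smul_sub, vsub_sub_vsub_cancel_right]

lemma vsub_orthogonalProjection_of_map_eq {s₁ s₂ : AffineSubspace ℝ P} [Nonempty s₁]
    [Nonempty s₂] [s₁.direction.HasOrthogonalProjection] [s₂.direction.HasOrthogonalProjection]
    {f : P ≃ᵃⁱ[ℝ] P} (h : s₁.map f.toAffineIsometry.toAffineMap = s₂) (p : P) :
    f p -ᵥ orthogonalProjection s₂ (f p) =
      f.linearIsometryEquiv (p -ᵥ orthogonalProjection s₁ p) := by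
  subst h
  rw [f.map_vsub]
  congr 1
  exact orthogonalProjection_map s₁ f.toAffineIsometry p

lemma linearIsometryEquiv_reflection (S : AffineSubspace ℝ P) [Nonempty S]
    [S.direction.HasOrthogonalProjection] :
    (reflection S).linearIsometryEquiv = S.direction.reflection := by
  ext; rfl

lemma inner_vsub_orthogonalProjection_eq_of_map_reflection {S F₁ F₂ : AffineSubspace ℝ P}
    [Nonempty S] [S.direction.HasOrthogonalProjection] [Nonempty F₁] [Nonempty F₂]
    [F₁.direction.HasOrthogonalProjection] [F₂.direction.HasOrthogonalProjection]
    (hF : F₁.map (reflection S).toAffineIsometry.toAffineMap = F₂) {x y p q : P}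
    (hx₁ : x ∈ F₁) (hy₁ : y ∈ F₁) (hx₂ : x ∈ F₂) (hy₂ : y ∈ F₂)
    (hq : q ∈ reflection S '' affineSpan ℝ {x, y, p}) :
    ⟪p -ᵥ orthogonalProjection F₁ p, q -ᵥ orthogonalProjection F₁ q⟫ =
      ⟪p -ᵥ orthogonalProjection F₂ p, q -ᵥ orthogonalProjection F₂ q⟫ := by
  have hF' : F₂.map (reflection S).toAffineIsometry.toAffineMap = F₁ := by
    have hinv : (reflection S).toAffineIsometry.toAffineMap.comp
        (reflection S).toAffineIsometry.toAffineMap = AffineMap.id ℝ P :=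
      AffineMap.ext (reflection_reflection S)
    rw [← hF, AffineSubspace.map_map, hinv, AffineSubspace.map_id]
  obtain ⟨t, ht, rfl⟩ := hq
  obtain ⟨r, p₀, hp₀, rfl⟩ := exists_eq_smul_vsub_vadd_of_mem_affineSpan_triple ht
  rw [vsub_orthogonalProjection_of_map_eq hF', vsub_orthogonalProjection_of_map_eq hF,
    vsub_orthogonalProjection_smul_vsub_vadd hx₁ (affineSpan_pair_le_of_mem_of_mem hx₁ hy₁ hp₀),
    vsub_orthogonalProjection_smul_vsub_vadd hx₂ (affineSpan_pair_le_of_mem_of_mem hx₂ hy₂ hp₀),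
    map_smul, map_smul, real_inner_smul_right, real_inner_smul_right,
    linearIsometryEquiv_reflection, ← Submodule.inner_reflection_left, real_inner_comm]

end EuclideanGeometry

lemma unitv_eq_normalize (v : Pt) : unitv v = NormedSpace.normalize v := rfl

lemma inner_orthUnit_unitv (v a : Pt) : ⟪orthUnit v (unitv a), unitv a⟫ = 0 := by
  rcases eq_or_ne a 0 with rfl | ha
  · simp [unitv]
  have hu : ⟪unitv a, unitv a⟫ = 1 := by
    rw [real_inner_self_eq_norm_sq, unitv_eq_normalize, NormedSpace.norm_normalize ha, one_pow]
  rw [orthUnit, unitv, real_inner_smul_left, inner_sub_left, real_inner_smul_left, hu]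
  ring

lemma norm_smul_orthUnit_add (v u : Pt) :
    ‖v - ⟪v, u⟫ • u‖ • orthUnit v u + ⟪v, u⟫ • u = v := by
  rw [orthUnit, unitv_eq_normalize, NormedSpace.norm_smul_normalize, sub_add_cancel]

lemma norm_orthUnit_of_notMem {X Y Z : Pt} (hZ : Z ∉ line[ℝ, X, Y]) :
    ‖orthUnit (Z - X) (unitv (Y - X))‖ = 1 := by
  rw [orthUnit, unitv_eq_normalize, NormedSpace.norm_normalize_eq_one_iff, sub_ne_zero]
  intro h
  apply hZ
  have hZ' : Z = (⟪Z - X, unitv (Y - X)⟫ * ‖Y - X‖⁻¹) • (Y -ᵥ X) +ᵥ X := by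
    rw [vsub_eq_sub, vadd_eq_add, mul_smul, ← unitv, ← h, sub_add_cancel]
  rw [hZ']
  exact smul_vsub_vadd_mem_affineSpan_pair _ _ _

lemma left_mem_bisectorPlane (X Y Z W : Pt) : X ∈ bisectorPlane X Y Z W :=
  AffineSubspace.self_mem_mk' _ _

instance (X Y Z W : Pt) : Nonempty (bisectorPlane X Y Z W) :=
  ⟨⟨X, left_mem_bisectorPlane X Y Z W⟩⟩

lemma right_mem_bisectorPlane (X Y Z W : Pt) : Y ∈ bisectorPlane X Y Z W := by
  rw [bisectorPlane, AffineSubspace.mem_mk', vsub_eq_sub]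
  convert Submodule.smul_mem _ ‖Y - X‖ (Submodule.subset_span (Set.mem_insert _ _)) using 1
  exact (NormedSpace.norm_smul_normalize _).symm

lemma bisectorPlane_comm (X Y Z W : Pt) : bisectorPlane X Y Z W = bisectorPlane X Y W Z := by
  rw [bisectorPlane, bisectorPlane, add_comm]

lemma edgeReflect_apply_left (X Y Z W : Pt) : edgeReflect X Y Z W X = X :=
  (EuclideanGeometry.reflection_eq_self_iff X).2 (left_mem_bisectorPlane X Y Z W)

lemma edgeReflect_apply_right (X Y Z W : Pt) : edgeReflect X Y Z W Y = Y :=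
  (EuclideanGeometry.reflection_eq_self_iff Y).2 (right_mem_bisectorPlane X Y Z W)

lemma edgeReflect_comm (X Y Z W : Pt) : edgeReflect X Y Z W = edgeReflect X Y W Z := by
  ext1 p
  exact EuclideanGeometry.eq_reflection_of_eq_subspace (bisectorPlane_comm X Y Z W) p

lemma edgeReflect_apply_of_notMem {X Y Z W : Pt} (hZ : Z ∉ line[ℝ, X, Y])
    (hW : W ∉ line[ℝ, X, Y]) :
    edgeReflect X Y Z W Z = ‖(Z - X) - ⟪Z - X, unitv (Y - X)⟫ • unitv (Y - X)‖ •
      orthUnit (W - X) (unitv (Y - X)) + ⟪Z - X, unitv (Y - X)⟫ • unitv (Y - X) + X := by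
  set u := unitv (Y - X)
  set z := orthUnit (Z - X) u
  set w := orthUnit (W - X) u
  set α := ‖(Z - X) - ⟪Z - X, u⟫ • u‖
  set β := ⟪Z - X, u⟫
  have hZX : α • z + β • u = Z - X := norm_smul_orthUnit_add _ _
  have hB : bisectorPlane X Y Z W = AffineSubspace.mk' X (Submodule.span ℝ {u, z + w}) := rfl
  -- `z` and `w` are unit vectors orthogonal to `u`, so the plane is the perpendicular bisector
  -- of `X + α z + β u = Z` and `X + α w + β u`.
  apply EuclideanGeometry.reflection_eq_of_midpoint_mem
  · rw [hB, AffineSubspace.mem_mk', Submodule.mem_span_pair, midpoint_vsub,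
      vsub_eq_sub, vsub_eq_sub, add_sub_cancel_right, ← hZX, invOf_eq_inv]
    exact ⟨β, α / 2, by module⟩
  · have hwz : α • w + β • u + X -ᵥ Z = α • (w - z) := by
      rw [vsub_eq_sub, ← sub_sub_eq_add_sub, ← hZX]
      module
    have huz : ⟪u, z⟫ = 0 := by rw [real_inner_comm]; exact inner_orthUnit_unitv _ _
    have huw : ⟪u, w⟫ = 0 := by rw [real_inner_comm]; exact inner_orthUnit_unitv _ _
    have hzz : ⟪z, z⟫ = 1 := by
      rw [real_inner_self_eq_norm_sq, norm_orthUnit_of_notMem hZ, one_pow]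
    have hww : ⟪w, w⟫ = 1 := by
      rw [real_inner_self_eq_norm_sq, norm_orthUnit_of_notMem hW, one_pow]
    rw [hB, AffineSubspace.direction_mk', Submodule.mem_orthogonal_span_pair, hwz,
      real_inner_smul_right, real_inner_smul_right, inner_sub_right, inner_sub_right,
      inner_add_left, inner_add_left, huz, huw, hzz, hww, real_inner_comm z w]
    constructor <;> ring

lemma edgeReflect_apply_mem_affineSpan {X Y Z W : Pt} (hZ : Z ∉ line[ℝ, X, Y])
    (hW : W ∉ line[ℝ, X, Y]) : edgeReflect X Y Z W Z ∈ affineSpan ℝ {X, Y, W} := by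
  have hX : X ∈ affineSpan ℝ {X, Y, W} := mem_affineSpan ℝ (by simp)
  have hu : unitv (Y - X) ∈ (affineSpan ℝ {X, Y, W}).direction :=
    Submodule.smul_mem _ _ (AffineSubspace.vsub_mem_direction (mem_affineSpan ℝ (by simp)) hX)
  have hw : orthUnit (W - X) (unitv (Y - X)) ∈ (affineSpan ℝ {X, Y, W}).direction :=
    Submodule.smul_mem _ _ (Submodule.sub_mem _
      (AffineSubspace.vsub_mem_direction (mem_affineSpan ℝ (by simp)) hX)
      (Submodule.smul_mem _ _ hu))
  rw [edgeReflect_apply_of_notMem hZ hW]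
  exact AffineSubspace.vadd_mem_of_mem_direction
    (Submodule.add_mem _ (Submodule.smul_mem _ _ hw) (Submodule.smul_mem _ _ hu)) hX

lemma map_edgeReflect_affineSpan {X Y Z W : Pt} (hZ : Z ∉ line[ℝ, X, Y])
    (hW : W ∉ line[ℝ, X, Y]) :
    (affineSpan ℝ {X, Y, Z}).map (edgeReflect X Y Z W).toAffineIsometry.toAffineMap =
      affineSpan ℝ {X, Y, W} := by
  apply le_antisymm
  · rw [AffineSubspace.map_span, affineSpan_le, Set.image_insert_eq, Set.image_insert_eq,
      Set.image_singleton, Set.insert_subset_iff, Set.insert_subset_iff,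
      Set.singleton_subset_iff]
    refine ⟨mem_affineSpan ℝ ?_, mem_affineSpan ℝ ?_, edgeReflect_apply_mem_affineSpan hZ hW⟩
    · simp [edgeReflect_apply_left]
    · simp [edgeReflect_apply_right]
  · rw [affineSpan_le, Set.insert_subset_iff, Set.insert_subset_iff, Set.singleton_subset_iff]
    refine ⟨⟨X, mem_affineSpan ℝ (by simp), edgeReflect_apply_left X Y Z W⟩,
      ⟨Y, mem_affineSpan ℝ (by simp), edgeReflect_apply_right X Y Z W⟩,
      ⟨edgeReflect X Y Z W W, ?_, EuclideanGeometry.reflection_reflection _ W⟩⟩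
    rw [edgeReflect_comm]
    exact edgeReflect_apply_mem_affineSpan hW hZ

lemma IsogCond.inner_vsub_faceProj_eq {X Y Z W P Q : Pt} (h : IsogCond X Y Z W P Q)
    (hZ : Z ∉ line[ℝ, X, Y]) (hW : W ∉ line[ℝ, X, Y]) :
    ⟪P - faceProj X Y Z P, Q - faceProj X Y Z Q⟫ =
      ⟪P - faceProj X Y W P, Q - faceProj X Y W Q⟫ :=
  EuclideanGeometry.inner_vsub_orthogonalProjection_eq_of_map_reflection
    (map_edgeReflect_affineSpan hZ hW) (mem_affineSpan ℝ (by simp)) (mem_affineSpan ℝ (by simp))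
    (mem_affineSpan ℝ (by simp)) (mem_affineSpan ℝ (by simp)) h

lemma dist_midpoint_faceProj_left (X Y Z P Q : Pt) :
    dist (midpoint ℝ P Q) (faceProj X Y Z P) =
      √(dist P Q ^ 2 / 4 + ⟪P - faceProj X Y Z P, Q - faceProj X Y Z Q⟫) := by
  rw [← Real.sqrt_sq dist_nonneg]
  exact congrArg _ (EuclideanGeometry.dist_midpoint_orthogonalProjection_sq _ P Q)

lemma dist_midpoint_faceProj_right (X Y Z P Q : Pt) :
    dist (midpoint ℝ P Q) (faceProj X Y Z Q) =
      √(dist P Q ^ 2 / 4 + ⟪P - faceProj X Y Z P, Q - faceProj X Y Z Q⟫) := by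
  rw [midpoint_comm, dist_midpoint_faceProj_left, dist_comm, real_inner_comm]

lemma faceProj_eq_of_set_eq {X Y Z X' Y' Z' : Pt} (h : ({X, Y, Z} : Set Pt) = {X', Y', Z'}) :
    faceProj X Y Z = faceProj X' Y' Z' := by
  unfold faceProj
  simp_rw [h]

theorem isogonal_conjugate_pedal_sphere_general
    (A B C D P Q : Pt) (hindep : AffineIndependent ℝ ![A, B, C, D])
    (hconj : IsIsogonalConjugate A B C D P Q) :
    ∃ r : ℝ,
      dist (midpoint ℝ P Q) (faceProj B C D P) = r ∧
      dist (midpoint ℝ P Q) (faceProj A C D P) = r ∧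
      dist (midpoint ℝ P Q) (faceProj A B D P) = r ∧
      dist (midpoint ℝ P Q) (faceProj A B C P) = r ∧
      dist (midpoint ℝ P Q) (faceProj B C D Q) = r ∧
      dist (midpoint ℝ P Q) (faceProj A C D Q) = r ∧
      dist (midpoint ℝ P Q) (faceProj A B D Q) = r ∧
      dist (midpoint ℝ P Q) (faceProj A B C Q) = r := by
  have hout : ∀ i j k : Fin 4, k ≠ i → k ≠ j →
      ![A, B, C, D] k ∉ line[ℝ, ![A, B, C, D] i, ![A, B, C, D] j] := by
    intro i j k hi hj
    rw [← Set.image_pair, hindep.mem_affineSpan_iff]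
    simp [hi, hj]
  obtain ⟨hAB, hAC, -, hBC, -, -⟩ := hconj
  have eAB := hAB.inner_vsub_faceProj_eq (hout 0 1 2 (by decide) (by decide))
    (hout 0 1 3 (by decide) (by decide))
  have eAC := hAC.inner_vsub_faceProj_eq (hout 0 2 1 (by decide) (by decide))
    (hout 0 2 3 (by decide) (by decide))
  have eBC := hBC.inner_vsub_faceProj_eq (hout 1 2 0 (by decide) (by decide))
    (hout 1 2 3 (by decide) (by decide))
  rw [show faceProj A C B = faceProj A B C from
    faceProj_eq_of_set_eq (by rw [Set.pair_comm])] at eAC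
  rw [show faceProj B C A = faceProj A B C from
    faceProj_eq_of_set_eq (by rw [Set.pair_comm, Set.insert_comm])] at eBC
  refine ⟨√(dist P Q ^ 2 / 4 + ⟪P - faceProj A B C P, Q - faceProj A B C Q⟫), ?_⟩
  simp only [dist_midpoint_faceProj_left, dist_midpoint_faceProj_right, ← eAB, ← eAC, ← eBC,
    and_self]

/-- If `P` and `Q` are isogonal conjugates with respect to a tetrahedron `ABCD`
(both lying on none of the four face planes), then the eight orthogonal projections of
`P` and `Q` onto the face planes are all equidistant from the midpoint `M` of `PQ`,
i.e. they lie on a common (pedal) sphere centered at `M`. -/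
theorem isogonal_conjugate_pedal_sphere
    (A B C D P Q : Pt) (hindep : AffineIndependent ℝ ![A, B, C, D])
    (hP₁ : P ∉ affineSpan ℝ ({B, C, D} : Set Pt))
    (hP₂ : P ∉ affineSpan ℝ ({A, C, D} : Set Pt))
    (hP₃ : P ∉ affineSpan ℝ ({A, B, D} : Set Pt))
    (hP₄ : P ∉ affineSpan ℝ ({A, B, C} : Set Pt))
    (hQ₁ : Q ∉ affineSpan ℝ ({B, C, D} : Set Pt))
    (hQ₂ : Q ∉ affineSpan ℝ ({A, C, D} : Set Pt))
    (hQ₃ : Q ∉ affineSpan ℝ ({A, B, D} : Set Pt))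
    (hQ₄ : Q ∉ affineSpan ℝ ({A, B, C} : Set Pt))
    (hconj : IsIsogonalConjugate A B C D P Q) :
    ∃ r : ℝ,
      dist (midpoint ℝ P Q) (faceProj B C D P) = r ∧
      dist (midpoint ℝ P Q) (faceProj A C D P) = r ∧
      dist (midpoint ℝ P Q) (faceProj A B D P) = r ∧
      dist (midpoint ℝ P Q) (faceProj A B C P) = r ∧
      dist (midpoint ℝ P Q) (faceProj B C D Q) = r ∧
      dist (midpoint ℝ P Q) (faceProj A C D Q) = r ∧
      dist (midpoint ℝ P Q) (faceProj A B D Q) = r ∧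
      dist (midpoint ℝ P Q) (faceProj A B C Q) = r :=
  isogonal_conjugate_pedal_sphere_general A B C D P Q hindep hconj
end
end

section
/- Let a, b, c be nonzero real numbers and let A = (−a, b, c), B = (a, −b, c), C = (a, b, −c), D = (−a, −b, −c) be points of ℝ³. Let v_A and v_B be the components of A − C and of B − C orthogonal to D − C. Then the angle φ between v_A and v_B (the dihedral angle of tetrahedron ABCD along edge CD) satisfies cos φ = (b²c² + c²a² − a²b²)/(a²b² + b²c² + c²a²). -/
open scoped RealInnerProductSpace

noncomputable section

/-- For nonzero reals `a, b, c` and `A = (−a, b, c)`, `B = (a, −b, c)`, `C = (a, b, −c)`,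
`D = (−a, −b, −c)`, let `vA` and `vB` be the components of `A − C` and `B − C`
orthogonal to `D − C`. The angle `φ` between `vA` and `vB` (the dihedral angle of
tetrahedron `ABCD` along edge `CD`) satisfies
`cos φ = (b²c² + c²a² − a²b²) / (a²b² + b²c² + c²a²)`. -/
theorem dihedral_angle_of_isosceles_tetrahedron
    (a b c : ℝ) (ha : a ≠ 0) (hb : b ≠ 0) (hc : c ≠ 0)
    (A B C D : Pt) (hA : A = ![-a, b, c]) (hB : B = ![a, -b, c])
    (hC : C = ![a, b, -c]) (hD : D = ![-a, -b, -c])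
    (vA vB : Pt)
    (hvA : vA = (A - C) - (⟪A - C, D - C⟫ / ⟪D - C, D - C⟫) • (D - C))
    (hvB : vB = (B - C) - (⟪B - C, D - C⟫ / ⟪D - C, D - C⟫) • (D - C)) :
    Real.cos (InnerProductGeometry.angle vA vB)
      = (b ^ 2 * c ^ 2 + c ^ 2 * a ^ 2 - a ^ 2 * b ^ 2)
        / (a ^ 2 * b ^ 2 + b ^ 2 * c ^ 2 + c ^ 2 * a ^ 2) := by
  have hA' : vA = WithLp.toLp 2 ![-(2*a*b^2)/(a^2+b^2), (2*a^2*b)/(a^2+b^2), 2*c] := by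
    have hp4 : a ^ 2 * 4 + b ^ 2 * 4 ≠ 0 := by positivity
    have hq : (-a - a) * (-a - a) + (-b - b) * (-b - b) ≠ 0 := by
      have : (-a - a) * (-a - a) + (-b - b) * (-b - b) = a ^ 2 * 4 + b ^ 2 * 4 := by ring
      rw [this]; exact hp4
    have hA2 : A = WithLp.toLp 2 ![-a, b, c] := by rw [← hA]
    have hC2 : C = WithLp.toLp 2 ![a, b, -c] := by rw [← hC]
    have hD2 : D = WithLp.toLp 2 ![-a, -b, -c] := by rw [← hD]
    subst hA2 hC2 hD2 hvA
    ext i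
    fin_cases i
    · simp [PiLp.inner_apply, Fin.sum_univ_three, -inner_self_eq_norm_sq_to_K]; field_simp; ring
    · simp [PiLp.inner_apply, Fin.sum_univ_three, -inner_self_eq_norm_sq_to_K]; field_simp; ring
    · simp [PiLp.inner_apply, Fin.sum_univ_three, -inner_self_eq_norm_sq_to_K]; ring
  have hB' : vB = WithLp.toLp 2 ![(2*a*b^2)/(a^2+b^2), -(2*a^2*b)/(a^2+b^2), 2*c] := by
    have hp4 : a ^ 2 * 4 + b ^ 2 * 4 ≠ 0 := by positivity
    have hq : (-a - a) * (-a - a) + (-b - b) * (-b - b) ≠ 0 := by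
      have : (-a - a) * (-a - a) + (-b - b) * (-b - b) = a ^ 2 * 4 + b ^ 2 * 4 := by ring
      rw [this]; exact hp4
    have hB2 : B = WithLp.toLp 2 ![a, -b, c] := by rw [← hB]
    have hC2 : C = WithLp.toLp 2 ![a, b, -c] := by rw [← hC]
    have hD2 : D = WithLp.toLp 2 ![-a, -b, -c] := by rw [← hD]
    subst hB2 hC2 hD2 hvB
    ext i
    fin_cases i
    · simp [PiLp.inner_apply, Fin.sum_univ_three, -inner_self_eq_norm_sq_to_K]; field_simp; ring
    · simp [PiLp.inner_apply, Fin.sum_univ_three, -inner_self_eq_norm_sq_to_K]; field_simp; ring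
    · simp [PiLp.inner_apply, Fin.sum_univ_three, -inner_self_eq_norm_sq_to_K]; ring
  have hnorm : ‖vB‖ = ‖vA‖ := by
    rw [hA', hB', EuclideanSpace.norm_eq, EuclideanSpace.norm_eq]
    congr 1
    simp [Fin.sum_univ_three]
    ring
  have hI : ⟪vA, vB⟫ = 4 * (c ^ 2 * (a ^ 2 + b ^ 2) - a ^ 2 * b ^ 2) / (a ^ 2 + b ^ 2) := by
    have hp : a ^ 2 + b ^ 2 ≠ 0 := by positivity
    rw [hA', hB']
    simp only [PiLp.inner_apply, Fin.sum_univ_three, RCLike.inner_apply, conj_trivial,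
      Matrix.cons_val_zero, Matrix.cons_val_one, Matrix.head_cons, Matrix.cons_val_two, Matrix.tail_cons]
    field_simp
    ring
  have hN : ⟪vA, vA⟫ = 4 * (c ^ 2 * (a ^ 2 + b ^ 2) + a ^ 2 * b ^ 2) / (a ^ 2 + b ^ 2) := by
    have hp : a ^ 2 + b ^ 2 ≠ 0 := by positivity
    rw [hA']
    simp only [PiLp.inner_apply, Fin.sum_univ_three, RCLike.inner_apply, conj_trivial,
      Matrix.cons_val_zero, Matrix.cons_val_one, Matrix.head_cons, Matrix.cons_val_two, Matrix.tail_cons]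
    field_simp
    ring
  rw [InnerProductGeometry.cos_angle, hnorm, ← real_inner_self_eq_norm_mul_norm, hI, hN]
  have hp : a ^ 2 + b ^ 2 ≠ 0 := by positivity
  have h1 : c ^ 2 * (a ^ 2 + b ^ 2) + a ^ 2 * b ^ 2 ≠ 0 := by positivity
  have h2 : a ^ 2 * b ^ 2 + b ^ 2 * c ^ 2 + c ^ 2 * a ^ 2 ≠ 0 := by positivity
  rw [div_div_div_eq, div_eq_div_iff (by positivity) h2]
  ring

end
end

section
/- Let ABCD be an isosceles tetrahedron and let ℓ_C be its bimedian joining the midpoints of edges DC and AB. Let X be any point of ℝ³, let P and Q be the orthogonal projections of X onto the face planes ACD and BCD respectively, and let R be the orthogonal projection of X onto the line ℓ_C. Then dist(P, R) = dist(R, Q). -/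
open EuclideanGeometry RealInnerProductSpace

noncomputable section
-- uniqueness helper
lemma proj_eq_of_mem_of_orth (s : AffineSubspace ℝ Pt) [Nonempty s]
    {p m : Pt} (hm : m ∈ s) (ho : p -ᵥ m ∈ s.directionᗮ) :
    (EuclideanGeometry.orthogonalProjection s p : Pt) = m := by
  have h := EuclideanGeometry.inter_eq_singleton_orthogonalProjection (s := s) p
  have hmem : m ∈ (s : Set Pt) ∩ (AffineSubspace.mk' p s.directionᗮ : Set Pt) := by
    refine ⟨hm, ?_⟩
    rw [AffineSubspace.mem_coe, AffineSubspace.mem_mk']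
    simpa [neg_vsub_eq_vsub_rev] using Submodule.neg_mem _ ho
  rw [h] at hmem
  exact (Set.mem_singleton_iff.mp hmem).symm

-- projection of the point-reflection of X through R is equidistant from R
lemma key_dist (s : AffineSubspace ℝ Pt) [Nonempty s] (R X : Pt) :
    dist (EuclideanGeometry.orthogonalProjection s ((R -ᵥ X) +ᵥ R) : Pt) R
      = dist (EuclideanGeometry.orthogonalProjection s X : Pt) R := by
  set pR := EuclideanGeometry.orthogonalProjection s R with hpR
  set pX := EuclideanGeometry.orthogonalProjection s X with hpX
  have hproj : (EuclideanGeometry.orthogonalProjection s ((R -ᵥ X) +ᵥ R) : Pt)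
      = ((pR : Pt) -ᵥ (pX : Pt)) +ᵥ (pR : Pt) := by
    have h1 := (EuclideanGeometry.orthogonalProjection s).map_vadd R (R -ᵥ X)
    have h2 : (EuclideanGeometry.orthogonalProjection s).contLinear (R -ᵥ X)
        = pR -ᵥ pX := (EuclideanGeometry.orthogonalProjection s).contLinear_map_vsub R X
    rw [h1, h2]
    simp [AffineSubspace.coe_vadd, hpR]
  rw [hproj]
  set m : Pt := ((pR : Pt) -ᵥ (pX : Pt)) +ᵥ (pR : Pt) with hm
  have hmmem : m ∈ s := by
    exact AffineSubspace.vadd_mem_of_mem_direction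
      (AffineSubspace.vsub_mem_direction pR.2 pX.2) pR.2
  have e1 := EuclideanGeometry.dist_sq_eq_dist_orthogonalProjection_sq_add_dist_orthogonalProjection_sq
    (s := s) (p₂ := R) hmmem
  have e2 := EuclideanGeometry.dist_sq_eq_dist_orthogonalProjection_sq_add_dist_orthogonalProjection_sq
    (s := s) (p₂ := R) (pX.2)
  have hdm : dist m (pR : Pt) = dist (pX : Pt) (pR : Pt) := by
    rw [hm, dist_eq_norm_vsub Pt, dist_eq_norm_vsub Pt, vadd_vsub, ← neg_vsub_eq_vsub_rev, norm_neg]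
  rw [hdm] at e1
  have : dist m R = dist (pX : Pt) R := by
    nlinarith [dist_nonneg (x := m) (y := R), dist_nonneg (x := (pX : Pt)) (y := R)]
  exact this

-- isometry maps orthogonal projections
lemma proj_map_isometry (σ : Pt ≃ᵃⁱ[ℝ] Pt) (s : AffineSubspace ℝ Pt) [Nonempty s]
    (X : Pt) :
    haveI : Nonempty (s.map σ.toAffineIsometry.toAffineMap) := by
      obtain ⟨⟨x, hx⟩⟩ := (by infer_instance : Nonempty s)
      exact ⟨⟨σ x, AffineSubspace.mem_map.2 ⟨x, hx, rfl⟩⟩⟩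
    (EuclideanGeometry.orthogonalProjection (s.map σ.toAffineIsometry.toAffineMap) (σ X) : Pt)
      = σ (EuclideanGeometry.orthogonalProjection s X : Pt) := by
  haveI : Nonempty (s.map σ.toAffineIsometry.toAffineMap) := by
    obtain ⟨⟨x, hx⟩⟩ := (by infer_instance : Nonempty s)
    exact ⟨⟨σ x, AffineSubspace.mem_map.2 ⟨x, hx, rfl⟩⟩⟩
  apply proj_eq_of_mem_of_orth
  · exact AffineSubspace.mem_map.2
      ⟨_, EuclideanGeometry.orthogonalProjection_mem X, rfl⟩
  · rw [AffineSubspace.map_direction]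
    intro v hv
    obtain ⟨w, hw, rfl⟩ := Submodule.mem_map.1 hv
    have hlin : σ.toAffineIsometry.toAffineMap.linear w = σ.linearIsometryEquiv w := rfl
    have hvs : σ X -ᵥ σ (EuclideanGeometry.orthogonalProjection s X : Pt)
        = σ.linearIsometryEquiv (X -ᵥ (EuclideanGeometry.orthogonalProjection s X : Pt)) :=
      (σ.map_vsub _ _).symm
    rw [hlin, real_inner_comm, hvs, LinearIsometryEquiv.inner_map_map]
    have := EuclideanGeometry.vsub_orthogonalProjection_mem_direction_orthogonal s X
    exact Submodule.inner_left_of_mem_orthogonal hw this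

lemma inner_aux1 (A B C D : Pt) (h₂ : dist B C = dist A D) (h₃ : dist A C = dist B D) :
    ⟪midpoint ℝ D C -ᵥ midpoint ℝ A B, A -ᵥ midpoint ℝ A B⟫ = 0 := by
  have e2 : ⟪B - C, B - C⟫ = ⟪A - D, A - D⟫ := by
    rw [real_inner_self_eq_norm_sq, real_inner_self_eq_norm_sq, ← dist_eq_norm, ← dist_eq_norm, h₂]
  have e3 : ⟪A - C, A - C⟫ = ⟪B - D, B - D⟫ := by
    rw [real_inner_self_eq_norm_sq, real_inner_self_eq_norm_sq, ← dist_eq_norm, ← dist_eq_norm, h₃]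
  simp only [vsub_eq_sub, midpoint_eq_smul_add, invOf_eq_inv] at *
  simp only [inner_sub_left, inner_sub_right, inner_add_left, inner_add_right,
    real_inner_smul_left, real_inner_smul_right] at *
  linarith [real_inner_comm A B, real_inner_comm A C, real_inner_comm A D,
    real_inner_comm B C, real_inner_comm B D, real_inner_comm C D]

lemma inner_aux2 (A B C D : Pt) (h₂ : dist B C = dist A D) (h₃ : dist A C = dist B D) :
    ⟪midpoint ℝ D C -ᵥ midpoint ℝ A B, C -ᵥ midpoint ℝ D C⟫ = 0 := by
  have e2 : ⟪B - C, B - C⟫ = ⟪A - D, A - D⟫ := by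
    rw [real_inner_self_eq_norm_sq, real_inner_self_eq_norm_sq, ← dist_eq_norm, ← dist_eq_norm, h₂]
  have e3 : ⟪A - C, A - C⟫ = ⟪B - D, B - D⟫ := by
    rw [real_inner_self_eq_norm_sq, real_inner_self_eq_norm_sq, ← dist_eq_norm, ← dist_eq_norm, h₃]
  simp only [vsub_eq_sub, midpoint_eq_smul_add, invOf_eq_inv] at *
  simp only [inner_sub_left, inner_sub_right, inner_add_left, inner_add_right,
    real_inner_smul_left, real_inner_smul_right] at *
  linarith [real_inner_comm A B, real_inner_comm A C, real_inner_comm A D,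
    real_inner_comm B C, real_inner_comm B D, real_inner_comm C D]

/-- Orthogonal projection of `P` onto the line through `U` and `V`. -/
def lineProj (U V P : Pt) : Pt :=
  haveI : Nonempty (affineSpan ℝ ({U, V} : Set Pt)) :=
    ⟨⟨U, subset_affineSpan ℝ _ (by simp)⟩⟩
  (EuclideanGeometry.orthogonalProjection (affineSpan ℝ ({U, V} : Set Pt)) P : Pt)

/-- Let `ABCD` be an isosceles tetrahedron and let `ℓ_C` be the bimedian joining the
midpoints of edges `DC` and `AB`. For any point `X`, if `P`, `Q` are the orthogonal
projections of `X` onto the face planes `ACD`, `BCD` and `R` is the orthogonal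
projection of `X` onto `ℓ_C`, then `dist P R = dist R Q`. -/
theorem projections_equidistant_from_bimedian_projection
    (A B C D : Pt) (hindep : AffineIndependent ℝ ![A, B, C, D])
    (h₁ : dist A B = dist C D) (h₂ : dist B C = dist A D) (h₃ : dist A C = dist B D)
    (X : Pt) :
    dist (faceProj A C D X) (lineProj (midpoint ℝ D C) (midpoint ℝ A B) X)
      = dist (lineProj (midpoint ℝ D C) (midpoint ℝ A B) X) (faceProj B C D X) := by
  set M₁ := midpoint ℝ D C with hM₁
  set M₂ := midpoint ℝ A B with hM₂
  set ℓ : AffineSubspace ℝ Pt := affineSpan ℝ ({M₁, M₂} : Set Pt) with hℓ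
  haveI : Nonempty ℓ := ⟨⟨M₁, subset_affineSpan ℝ _ (by simp)⟩⟩
  haveI : Nonempty (affineSpan ℝ ({A, C, D} : Set Pt)) :=
    ⟨⟨A, subset_affineSpan ℝ _ (by simp)⟩⟩
  haveI : Nonempty (affineSpan ℝ ({B, C, D} : Set Pt)) :=
    ⟨⟨B, subset_affineSpan ℝ _ (by simp)⟩⟩
  have hdir : ℓ.direction = ℝ ∙ (M₁ -ᵥ M₂) := by
    rw [hℓ, direction_affineSpan, vectorSpan_pair]
  set σ := EuclideanGeometry.reflection ℓ with hσ
  -- projection of A onto ℓ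
  have hpA : (EuclideanGeometry.orthogonalProjection ℓ A : Pt) = M₂ := by
    apply proj_eq_of_mem_of_orth
    · exact right_mem_affineSpan_pair ℝ _ _
    · rw [hdir, Submodule.mem_orthogonal_singleton_iff_inner_right]
      exact inner_aux1 A B C D h₂ h₃
  have hpC : (EuclideanGeometry.orthogonalProjection ℓ C : Pt) = M₁ := by
    apply proj_eq_of_mem_of_orth
    · exact left_mem_affineSpan_pair ℝ _ _
    · rw [hdir, Submodule.mem_orthogonal_singleton_iff_inner_right]
      exact inner_aux2 A B C D h₂ h₃
  have hpD : (EuclideanGeometry.orthogonalProjection ℓ D : Pt) = M₁ := by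
    apply proj_eq_of_mem_of_orth
    · exact left_mem_affineSpan_pair ℝ _ _
    · rw [hdir, Submodule.mem_orthogonal_singleton_iff_inner_right]
      have hneg : D -ᵥ M₁ = -(C -ᵥ M₁) := by
        simp only [hM₁, vsub_eq_sub, midpoint_eq_smul_add, invOf_eq_inv]
        module
      rw [hneg, inner_neg_right, inner_aux2 A B C D h₂ h₃, neg_zero]
  have hσA : σ A = B := by
    rw [hσ, EuclideanGeometry.reflection_apply', hpA, hM₂]
    simp only [vsub_eq_sub, vadd_eq_add, midpoint_eq_smul_add, invOf_eq_inv]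
    module
  have hσC : σ C = D := by
    rw [hσ, EuclideanGeometry.reflection_apply', hpC, hM₁]
    simp only [vsub_eq_sub, vadd_eq_add, midpoint_eq_smul_add, invOf_eq_inv]
    module
  have hσD : σ D = C := by
    rw [hσ, EuclideanGeometry.reflection_apply', hpD, hM₁]
    simp only [vsub_eq_sub, vadd_eq_add, midpoint_eq_smul_add, invOf_eq_inv]
    module
  -- the image of plane ACD under σ is plane BCD
  have hmap : (affineSpan ℝ ({A, C, D} : Set Pt)).map σ.toAffineIsometry.toAffineMap
      = affineSpan ℝ ({B, C, D} : Set Pt) := by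
    rw [AffineSubspace.map_span]
    congr 1
    have himg : σ.toAffineIsometry.toAffineMap '' ({A, C, D} : Set Pt) = {B, D, C} := by
      simp only [Set.image_insert_eq, Set.image_singleton]
      have : ∀ x : Pt, σ.toAffineIsometry.toAffineMap x = σ x := fun _ => rfl
      rw [this A, this C, this D, hσA, hσC, hσD]
    rw [himg, Set.pair_comm D C]
  -- R is fixed by σ
  set R : Pt := lineProj M₁ M₂ X with hR
  have hRproj : R = (EuclideanGeometry.orthogonalProjection ℓ X : Pt) := rfl
  have hRmem : R ∈ ℓ := by rw [hRproj]; exact EuclideanGeometry.orthogonalProjection_mem X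
  have hσR : σ R = R := (EuclideanGeometry.reflection_eq_self_iff R).2 hRmem
  have hσX : σ X = (R -ᵥ X) +ᵥ R := by
    rw [hσ, EuclideanGeometry.reflection_apply', hRproj]
  -- σ maps P to the projection of σ X onto plane BCD
  have hP : σ (faceProj A C D X)
      = (EuclideanGeometry.orthogonalProjection (affineSpan ℝ ({B, C, D} : Set Pt)) (σ X) : Pt) := by
    haveI : Nonempty ((affineSpan ℝ ({A, C, D} : Set Pt)).map σ.toAffineIsometry.toAffineMap) := by
      rw [hmap]; infer_instance
    have h1 := proj_map_isometry σ (affineSpan ℝ ({A, C, D} : Set Pt)) X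
    have h2 := EuclideanGeometry.eq_orthogonalProjection_of_eq_subspace
      (s := (affineSpan ℝ ({A, C, D} : Set Pt)).map σ.toAffineIsometry.toAffineMap)
      (s' := affineSpan ℝ ({B, C, D} : Set Pt)) hmap (σ X)
    calc σ (faceProj A C D X)
        = (EuclideanGeometry.orthogonalProjection
            ((affineSpan ℝ ({A, C, D} : Set Pt)).map σ.toAffineIsometry.toAffineMap) (σ X) : Pt) :=
          h1.symm
      _ = _ := h2
  calc dist (faceProj A C D X) R
      = dist (σ (faceProj A C D X)) (σ R) := (σ.dist_map _ _).symm
    _ = dist (EuclideanGeometry.orthogonalProjection (affineSpan ℝ ({B, C, D} : Set Pt))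
          ((R -ᵥ X) +ᵥ R) : Pt) R := by rw [hP, hσR, hσX]
    _ = dist (EuclideanGeometry.orthogonalProjection (affineSpan ℝ ({B, C, D} : Set Pt)) X : Pt) R :=
        key_dist _ R X
    _ = dist R (faceProj B C D X) := dist_comm _ _

end
end

section
/- Let a, b, c be nonzero real numbers and let A = (−a, b, c), B = (a, −b, c), C = (a, b, −c), D = (−a, −b, −c) be points of ℝ³. Let P = (x, y, z) satisfy x² + y² + z² = a² + b² + c² (so P lies on the circumsphere of ABCD) and P ∉ {A, B, C, D}. Then the circumcircles of triangles ABP and CDP are tangent at P — that is, the tangent line at P of the circle through A, B, P (the line through P lying in the plane of A, B, P and orthogonal to the vector from P to the circumcenter of ABP) coincides with the tangent line at P of the circle through C, D, P — if and only if a·b·z + c·x·y = 0. -/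
open scoped RealInnerProductSpace

noncomputable section

lemma inner3 (f g : Pt) : ⟪f, g⟫ = f 0 * g 0 + f 1 * g 1 + f 2 * g 2 := by
  simp [PiLp.inner_apply, Fin.sum_univ_three, RCLike.inner_apply, conj_trivial]; ring

lemma mem_span3 (p₁ p₂ p₃ q : Pt) :
    q ∈ affineSpan ℝ ({p₁, p₂, p₃} : Set Pt) ↔
      ∃ s t : ℝ, s • (p₁ - p₃) + t • (p₂ - p₃) = q - p₃ := by
  have h3 : p₃ ∈ ({p₁, p₂, p₃} : Set Pt) := by simp
  rw [← AffineSubspace.vsub_right_mem_direction_iff_mem (mem_affineSpan ℝ h3) q,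
    direction_affineSpan, vectorSpan_eq_span_vsub_set_right ℝ h3]
  have himg : (· -ᵥ p₃) '' ({p₁, p₂, p₃} : Set Pt) = insert 0 {p₁ - p₃, p₂ - p₃} := by
    simp only [Set.image_insert_eq, Set.image_singleton, vsub_eq_sub, sub_self]
    ext w; simp; tauto
  rw [himg, Submodule.span_insert_zero, Submodule.mem_span_pair]
  simp [vsub_eq_sub]

lemma inner_sub_of_dist_eq {S X Y : Pt} (h : dist S X = dist S Y)
    (hXY : ⟪X, X⟫ = ⟪Y, Y⟫) : ⟪X - Y, S⟫ = 0 := by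
  have h2 : ‖S - X‖ ^ 2 = ‖S - Y‖ ^ 2 := by
    rw [dist_eq_norm, dist_eq_norm] at h; rw [h]
  rw [norm_sub_sq_real, norm_sub_sq_real, ← real_inner_self_eq_norm_sq,
    ← real_inner_self_eq_norm_sq, ← real_inner_self_eq_norm_sq] at h2
  rw [inner_sub_left, real_inner_comm S X, real_inner_comm S Y]
  linarith


lemma ext3 {f g : Pt} (h0 : f 0 = g 0) (h1 : f 1 = g 1) (h2 : f 2 = g 2) : f = g := by
  ext i; fin_cases i
  · exact h0
  · exact h1
  · exact h2

set_option maxHeartbeats 4000000 in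
set_option maxRecDepth 8000 in
lemma tangent_incl (a b c x y z : ℝ) (ha : a ≠ 0)
    (hsphere : x  ^  2 + y  ^  2 + z  ^  2 = a  ^  2 + b  ^  2 + c  ^  2)
    (hcond : a * b * z + c * x * y = 0)
    (A B C D P : Pt)
    (hA : A = ![-a, b, c]) (hB : B = ![a, -b, c]) (hC : C = ![a, b, -c])
    (hD : D = ![-a, -b, -c]) (hP : P = ![x, y, z])
    (hPA : P ≠ A) (hPC : P ≠ C) (hPD : P ≠ D)
    (S₁ S₂ : Pt)
    (hS1A : ⟪A - P, S₁⟫ = 0) (hS1B : ⟪B - P, S₁⟫ = 0)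
    (hS2C : ⟪C - P, S₂⟫ = 0) (hS2D : ⟪D - P, S₂⟫ = 0)
    (q : Pt)
    (hq1 : q ∈ affineSpan ℝ ({A, B, P} : Set Pt))
    (hq2 : ⟪q - P, S₁ - P⟫ = 0) :
    q ∈ affineSpan ℝ ({C, D, P} : Set Pt) ∧ ⟪q - P, S₂ - P⟫ = 0 := by
  obtain ⟨s, t, hst⟩ := (mem_span3 _ _ _ q).1 hq1
  have huP : ⟪A - P, P⟫ = (-(a*x) + b*y + c*z - (x ^ 2 + y ^ 2 + z ^ 2)) := by
    rw [inner3]; simp [hA, hP, PiLp.sub_apply]; ring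
  have hvP : ⟪B - P, P⟫ = (a*x - b*y + c*z - (x ^ 2 + y ^ 2 + z ^ 2)) := by
    rw [inner3]; simp [hB, hP, PiLp.sub_apply]; ring
  have hu2P : ⟪C - P, P⟫ = (a*x + b*y - c*z - (x ^ 2 + y ^ 2 + z ^ 2)) := by
    rw [inner3]; simp [hC, hP, PiLp.sub_apply]; ring
  have hv2P : ⟪D - P, P⟫ = (-(a*x) - b*y - c*z - (x ^ 2 + y ^ 2 + z ^ 2)) := by
    rw [inner3]; simp [hD, hP, PiLp.sub_apply]; ring
  have hrel : s * (-(a*x) + b*y + c*z - (x ^ 2 + y ^ 2 + z ^ 2)) + t * (a*x - b*y + c*z - (x ^ 2 + y ^ 2 + z ^ 2)) = 0 := by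
    have h0 := hq2
    rw [← hst, inner_add_left, real_inner_smul_left, real_inner_smul_left,
      inner_sub_right, inner_sub_right, hS1A, hS1B, huP, hvP] at h0
    linarith
  have huu : ⟪A - P, A - P⟫ = -2 * (-(a*x) + b*y + c*z - (x ^ 2 + y ^ 2 + z ^ 2)) := by
    rw [inner3]; simp [hA, hP, PiLp.sub_apply]; linear_combination -hsphere
  have hPu : (-(a*x) + b*y + c*z - (x ^ 2 + y ^ 2 + z ^ 2)) ≠ 0 := by
    intro h0
    have h1 : ⟪A - P, A - P⟫ = 0 := by rw [huu, h0]; ring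
    exact hPA (sub_eq_zero.mp (inner_self_eq_zero.mp h1)).symm
  have hab : (0:ℝ) < a ^ 2 + b ^ 2 := by positivity
  have hN : (4*(a ^ 2 + b ^ 2)*(z + c) ^ 2 + 4*(a*y - b*x) ^ 2) ≠ 0 := by
    intro h0
    have h1' : (z + c) ^ 2 = 0 := by
      by_contra hne
      have hpos : 0 < (z + c) ^ 2 := lt_of_le_of_ne (sq_nonneg _) (Ne.symm hne)
      nlinarith [sq_nonneg (a*y - b*x), mul_pos hab hpos]
    have h1 : z + c = 0 := sq_eq_zero_iff.mp h1'
    have h2' : (a*y - b*x) ^ 2 = 0 := by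
      nlinarith [mul_nonneg hab.le (sq_nonneg (z + c)), sq_nonneg (a*y - b*x)]
    have h2 : a*y - b*x = 0 := sq_eq_zero_iff.mp h2'
    have h3 : (x - a) * (x + a) * (a ^ 2 + b ^ 2) = 0 := by
      linear_combination a ^ 2 * hsphere - a ^ 2*(z - c) * h1 - (b*x + a*y) * h2
    have h4 : (x - a) * (x + a) = 0 := by
      rcases mul_eq_zero.mp h3 with h | h
      · exact h
      · exact absurd h hab.ne'
    rcases mul_eq_zero.mp h4 with h | h
    · have hx : x = a := by linarith
      have hy : y = b := mul_left_cancel₀ ha (by linear_combination h2 + b * h)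
      have hz : z = -c := by linarith
      exact hPC (by ext i; fin_cases i <;> simp [hP, hC, hx, hy, hz])
    · have hx : x = -a := by linarith
      have hy : y = -b := mul_left_cancel₀ ha (by linear_combination h2 + b * h)
      have hz : z = -c := by linarith
      exact hPD (by ext i; fin_cases i <;> simp [hP, hD, hx, hy, hz])
  have hPuN : (-(a*x) + b*y + c*z - (x ^ 2 + y ^ 2 + z ^ 2)) * (4*(a ^ 2 + b ^ 2)*(z + c) ^ 2 + 4*(a*y - b*x) ^ 2) ≠ 0 := mul_ne_zero hPu hN
  have key : ((-(a*x) + b*y + c*z - (x ^ 2 + y ^ 2 + z ^ 2)) * (4*(a ^ 2 + b ^ 2)*(z + c) ^ 2 + 4*(a*y - b*x) ^ 2)) • (q - P)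
      = (t * ((4) * a ^ 3 * c ^ 2 * x + (-4) * a ^ 3 * x * y ^ 2 + (-4) * a ^ 3 * x * z ^ 2 + (-4) * a ^ 2 * b * c ^ 2 * y + (8) * a ^ 2 * b * c * y * z + (-4) * a ^ 2 * b * y ^ 3 + (-4) * a ^ 2 * b * y * z ^ 2 + (4) * a ^ 2 * c ^ 3 * z + (4) * a ^ 2 * c ^ 2 * x ^ 2 + (-4) * a ^ 2 * c ^ 2 * y ^ 2 + (4) * a ^ 2 * c ^ 2 * z ^ 2 + (-4) * a ^ 2 * c * y ^ 2 * z + (-4) * a ^ 2 * c * z ^ 3 + (-4) * a ^ 2 * x ^ 2 * y ^ 2 + (-4) * a ^ 2 * x ^ 2 * z ^ 2 + (-4) * a ^ 2 * y ^ 4 + (-8) * a ^ 2 * y ^ 2 * z ^ 2 + (-4) * a ^ 2 * z ^ 4 + (4) * a * b ^ 2 * c ^ 2 * x + (-8) * a * b ^ 2 * c * x * z + (4) * a * b ^ 2 * x ^ 3 + (4) * a * b ^ 2 * x * z ^ 2 + (-4) * b ^ 3 * c ^ 2 * y + (4) * b ^ 3 * x ^ 2 * y + (4) * b ^ 3 *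 y * z ^ 2 + (-4) * b ^ 2 * c ^ 3 * z + (4) * b ^ 2 * c ^ 2 * x ^ 2 + (-4) * b ^ 2 * c ^ 2 * y ^ 2 + (-4) * b ^ 2 * c ^ 2 * z ^ 2 + (4) * b ^ 2 * c * x ^ 2 * z + (4) * b ^ 2 * c * z ^ 3 + (4) * b ^ 2 * x ^ 4 + (4) * b ^ 2 * x ^ 2 * y ^ 2 + (8) * b ^ 2 * x ^ 2 * z ^ 2 + (4) * b ^ 2 * y ^ 2 * z ^ 2 + (4) * b ^ 2 * z ^ 4)) • (C - P) + (t * ((4) * a ^ 3 * c ^ 2 * x + (-4) * a ^ 3 * x * y ^ 2 + (-4) * a ^ 3 * x * z ^ 2 + (-4) * a ^ 2 * b * c ^ 2 * y + (8) * a ^ 2 * b * c * y * z + (-4) * a ^ 2 * b * y ^ 3 + (-4) * a ^ 2 * b * y * z ^ 2 + (-4) * a ^ 2 * c ^ 3 * z + (-4) * a ^ 2 * c ^ 2 * x ^ 2 + (4) * a ^ 2 * c ^ 2 * y ^ 2 + (-4) * a ^ 2 * c ^ 2 * z ^ 2 + (4) * a ^ 2 * c * y ^ 2 * z + (4) * a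 ^ 2 * c * z ^ 3 + (4) * a ^ 2 * x ^ 2 * y ^ 2 + (4) * a ^ 2 * x ^ 2 * z ^ 2 + (4) * a ^ 2 * y ^ 4 + (8) * a ^ 2 * y ^ 2 * z ^ 2 + (4) * a ^ 2 * z ^ 4 + (4) * a * b ^ 2 * c ^ 2 * x + (-8) * a * b ^ 2 * c * x * z + (4) * a * b ^ 2 * x ^ 3 + (4) * a * b ^ 2 * x * z ^ 2 + (-4) * b ^ 3 * c ^ 2 * y + (4) * b ^ 3 * x ^ 2 * y + (4) * b ^ 3 * y * z ^ 2 + (4) * b ^ 2 * c ^ 3 * z + (-4) * b ^ 2 * c ^ 2 * x ^ 2 + (4) * b ^ 2 * c ^ 2 * y ^ 2 + (4) * b ^ 2 * c ^ 2 * z ^ 2 + (-4) * b ^ 2 * c * x ^ 2 * z + (-4) * b ^ 2 * c * z ^ 3 + (-4) * b ^ 2 * x ^ 4 + (-4) * b ^ 2 * x ^ 2 * y ^ 2 + (-8) * b ^ 2 * x ^ 2 * z ^ 2 + (-4) * b ^ 2 * y ^ 2 * z ^ 2 + (-4) * b ^ 2 * z ^ 4)) • (D - P) := by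
    rw [← hst]
    refine ext3 ?_ ?_ ?_ <;>
      simp only [PiLp.smul_apply, PiLp.add_apply, PiLp.sub_apply, hA, hB, hC, hD, hP, smul_eq_mul, Matrix.cons_val_zero, Matrix.cons_val_one, Matrix.head_cons, Matrix.cons_val_two, Matrix.tail_cons]
    · linear_combination ((4*(a ^ 2 + b ^ 2)*(z + c) ^ 2 + 4*(a*y - b*x) ^ 2) * (-a - x)) * hrel + (t * 8*(a ^ 2 + b ^ 2) * (-2*b*(z + c))) * hcond +
        (t * 8*a*b*z * (-2*b*(z + c))) * hsphere
    · linear_combination ((4*(a ^ 2 + b ^ 2)*(z + c) ^ 2 + 4*(a*y - b*x) ^ 2) * (b - y)) * hrel + (t * 8*(a ^ 2 + b ^ 2) * (2*a*(z + c))) * hcond +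
        (t * 8*a*b*z * (2*a*(z + c))) * hsphere
    · linear_combination ((4*(a ^ 2 + b ^ 2)*(z + c) ^ 2 + 4*(a*y - b*x) ^ 2) * (c - z)) * hrel + (t * 8*(a ^ 2 + b ^ 2) * (2*(b*x - a*y))) * hcond +
        (t * 8*a*b*z * (2*(b*x - a*y))) * hsphere
  have hvec : (((-(a*x) + b*y + c*z - (x ^ 2 + y ^ 2 + z ^ 2)) * (4*(a ^ 2 + b ^ 2)*(z + c) ^ 2 + 4*(a*y - b*x) ^ 2))⁻¹ * (t * ((4) * a ^ 3 * c ^ 2 * x + (-4) * a ^ 3 * x * y ^ 2 + (-4) * a ^ 3 * x * z ^ 2 + (-4) * a ^ 2 * b * c ^ 2 * y + (8) * a ^ 2 * b * c * y * z + (-4) * a ^ 2 * b * y ^ 3 + (-4) * a ^ 2 * b * y * z ^ 2 + (4) * a ^ 2 * c ^ 3 * z + (4) * a ^ 2 * c ^ 2 * x ^ 2 + (-4) * a ^ 2 * c ^ 2 * y ^ 2 + (4) * a ^ 2 * c ^ 2 * z ^ 2 + (-4) * a ^ 2 * c * y ^ 2 * z + (-4) * a ^ 2 * c * z ^ 3 +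 (-4) * a ^ 2 * x ^ 2 * y ^ 2 + (-4) * a ^ 2 * x ^ 2 * z ^ 2 + (-4) * a ^ 2 * y ^ 4 + (-8) * a ^ 2 * y ^ 2 * z ^ 2 + (-4) * a ^ 2 * z ^ 4 + (4) * a * b ^ 2 * c ^ 2 * x + (-8) * a * b ^ 2 * c * x * z + (4) * a * b ^ 2 * x ^ 3 + (4) * a * b ^ 2 * x * z ^ 2 + (-4) * b ^ 3 * c ^ 2 * y + (4) * b ^ 3 * x ^ 2 * y + (4) * b ^ 3 * y * z ^ 2 + (-4) * b ^ 2 * c ^ 3 * z + (4) * b ^ 2 * c ^ 2 * x ^ 2 + (-4) * b ^ 2 * c ^ 2 * y ^ 2 + (-4) * b ^ 2 * c ^ 2 * z ^ 2 + (4) * b ^ 2 * c * x ^ 2 * z + (4) * b ^ 2 * c * z ^ 3 + (4) * b ^ 2 * x ^ 4 + (4) * b ^ 2 * x ^ 2 * y ^ 2 + (8) * b ^ 2 * x ^ 2 * z ^ 2 + (4) * b ^ 2 * y ^ 2 * z ^ 2 + (4) * b ^ 2 * z ^ 4))) • (C - P) + (((-(a*x) + b*y + c*z - (x ^ 2 +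 y ^ 2 + z ^ 2)) * (4*(a ^ 2 + b ^ 2)*(z + c) ^ 2 + 4*(a*y - b*x) ^ 2))⁻¹ * (t * ((4) * a ^ 3 * c ^ 2 * x + (-4) * a ^ 3 * x * y ^ 2 + (-4) * a ^ 3 * x * z ^ 2 + (-4) * a ^ 2 * b * c ^ 2 * y + (8) * a ^ 2 * b * c * y * z + (-4) * a ^ 2 * b * y ^ 3 + (-4) * a ^ 2 * b * y * z ^ 2 + (-4) * a ^ 2 * c ^ 3 * z + (-4) * a ^ 2 * c ^ 2 * x ^ 2 + (4) * a ^ 2 * c ^ 2 * y ^ 2 + (-4) * a ^ 2 * c ^ 2 * z ^ 2 + (4) * a ^ 2 * c * y ^ 2 * z + (4) * a ^ 2 * c * z ^ 3 + (4) * a ^ 2 * x ^ 2 * y ^ 2 + (4) * a ^ 2 * x ^ 2 * z ^ 2 + (4) * a ^ 2 * y ^ 4 + (8) * a ^ 2 * y ^ 2 * z ^ 2 + (4) * a ^ 2 * z ^ 4 + (4) * a * b ^ 2 * c ^ 2 * x + (-8) * a * b ^ 2 * c * x * z + (4) * a * b ^ 2 * x ^ 3 + (4) * a * b ^ 2 *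 x * z ^ 2 + (-4) * b ^ 3 * c ^ 2 * y + (4) * b ^ 3 * x ^ 2 * y + (4) * b ^ 3 * y * z ^ 2 + (4) * b ^ 2 * c ^ 3 * z + (-4) * b ^ 2 * c ^ 2 * x ^ 2 + (4) * b ^ 2 * c ^ 2 * y ^ 2 + (4) * b ^ 2 * c ^ 2 * z ^ 2 + (-4) * b ^ 2 * c * x ^ 2 * z + (-4) * b ^ 2 * c * z ^ 3 + (-4) * b ^ 2 * x ^ 4 + (-4) * b ^ 2 * x ^ 2 * y ^ 2 + (-8) * b ^ 2 * x ^ 2 * z ^ 2 + (-4) * b ^ 2 * y ^ 2 * z ^ 2 + (-4) * b ^ 2 * z ^ 4))) • (D - P) = q - P := by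
    have h9 := congrArg (fun w : Pt => ((-(a*x) + b*y + c*z - (x ^ 2 + y ^ 2 + z ^ 2)) * (4*(a ^ 2 + b ^ 2)*(z + c) ^ 2 + 4*(a*y - b*x) ^ 2))⁻¹ • w) key
    simp only [smul_add, smul_smul] at h9
    rw [inv_mul_cancel₀ hPuN, one_smul] at h9
    exact h9.symm
  refine ⟨(mem_span3 _ _ _ q).2 ⟨_, _, hvec⟩, ?_⟩
  have h8 : ⟪(((-(a*x) + b*y + c*z - (x ^ 2 + y ^ 2 + z ^ 2)) * (4*(a ^ 2 + b ^ 2)*(z + c) ^ 2 + 4*(a*y - b*x) ^ 2))⁻¹ * (t * ((4) * a ^ 3 * c ^ 2 * x + (-4) * a ^ 3 * x * y ^ 2 + (-4) * a ^ 3 * x * z ^ 2 + (-4) * a ^ 2 * b * c ^ 2 * y + (8) * a ^ 2 * b * c * y * z + (-4) * a ^ 2 * b * y ^ 3 + (-4) * a ^ 2 * b * y * z ^ 2 + (4) * a ^ 2 * c ^ 3 * z + (4) * a ^ 2 * c ^ 2 * x ^ 2 + (-4) * a ^ 2 * c ^ 2 * y ^ 2 + (4) * a ^ 2 * c ^ 2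 * z ^ 2 + (-4) * a ^ 2 * c * y ^ 2 * z + (-4) * a ^ 2 * c * z ^ 3 + (-4) * a ^ 2 * x ^ 2 * y ^ 2 + (-4) * a ^ 2 * x ^ 2 * z ^ 2 + (-4) * a ^ 2 * y ^ 4 + (-8) * a ^ 2 * y ^ 2 * z ^ 2 + (-4) * a ^ 2 * z ^ 4 + (4) * a * b ^ 2 * c ^ 2 * x + (-8) * a * b ^ 2 * c * x * z + (4) * a * b ^ 2 * x ^ 3 + (4) * a * b ^ 2 * x * z ^ 2 + (-4) * b ^ 3 * c ^ 2 * y + (4) * b ^ 3 * x ^ 2 * y + (4) * b ^ 3 * y * z ^ 2 + (-4) * b ^ 2 * c ^ 3 * z + (4) * b ^ 2 * c ^ 2 * x ^ 2 + (-4) * b ^ 2 * c ^ 2 * y ^ 2 + (-4) * b ^ 2 * c ^ 2 * z ^ 2 + (4) * b ^ 2 * c * x ^ 2 * z + (4) * b ^ 2 * c * z ^ 3 + (4) * b ^ 2 * x ^ 4 + (4) * b ^ 2 * x ^ 2 * y ^ 2 + (8) * b ^ 2 * x ^ 2 * z ^ 2 + (4) * b ^ 2 * y ^ 2 * z ^ 2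 + (4) * b ^ 2 * z ^ 4))) • (C - P) + (((-(a*x) + b*y + c*z - (x ^ 2 + y ^ 2 + z ^ 2)) * (4*(a ^ 2 + b ^ 2)*(z + c) ^ 2 + 4*(a*y - b*x) ^ 2))⁻¹ * (t * ((4) * a ^ 3 * c ^ 2 * x + (-4) * a ^ 3 * x * y ^ 2 + (-4) * a ^ 3 * x * z ^ 2 + (-4) * a ^ 2 * b * c ^ 2 * y + (8) * a ^ 2 * b * c * y * z + (-4) * a ^ 2 * b * y ^ 3 + (-4) * a ^ 2 * b * y * z ^ 2 + (-4) * a ^ 2 * c ^ 3 * z + (-4) * a ^ 2 * c ^ 2 * x ^ 2 + (4) * a ^ 2 * c ^ 2 * y ^ 2 + (-4) * a ^ 2 * c ^ 2 * z ^ 2 + (4) * a ^ 2 * c * y ^ 2 * z + (4) * a ^ 2 * c * z ^ 3 + (4) * a ^ 2 * x ^ 2 * y ^ 2 + (4) * a ^ 2 * x ^ 2 * z ^ 2 + (4) * a ^ 2 * y ^ 4 + (8) * a ^ 2 * y ^ 2 * z ^ 2 + (4) * a ^ 2 * z ^ 4 + (4) * a * b ^ 2 * c ^ 2 * x + (-8)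 * a * b ^ 2 * c * x * z + (4) * a * b ^ 2 * x ^ 3 + (4) * a * b ^ 2 * x * z ^ 2 + (-4) * b ^ 3 * c ^ 2 * y + (4) * b ^ 3 * x ^ 2 * y + (4) * b ^ 3 * y * z ^ 2 + (4) * b ^ 2 * c ^ 3 * z + (-4) * b ^ 2 * c ^ 2 * x ^ 2 + (4) * b ^ 2 * c ^ 2 * y ^ 2 + (4) * b ^ 2 * c ^ 2 * z ^ 2 + (-4) * b ^ 2 * c * x ^ 2 * z + (-4) * b ^ 2 * c * z ^ 3 + (-4) * b ^ 2 * x ^ 4 + (-4) * b ^ 2 * x ^ 2 * y ^ 2 + (-8) * b ^ 2 * x ^ 2 * z ^ 2 + (-4) * b ^ 2 * y ^ 2 * z ^ 2 + (-4) * b ^ 2 * z ^ 4))) • (D - P), P⟫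
      = ⟪s • (A - P) + t • (B - P), P⟫ := by rw [hvec, hst]
  rw [inner_add_left, inner_add_left, real_inner_smul_left, real_inner_smul_left,
    real_inner_smul_left, real_inner_smul_left, hu2P, hv2P, huP, hvP] at h8
  rw [← hvec, inner_add_left, real_inner_smul_left, real_inner_smul_left,
    inner_sub_right, inner_sub_right, hS2C, hS2D, hu2P, hv2P]
  linear_combination -h8 - hrel

set_option maxHeartbeats 1000000 in

/-- Let `a, b, c` be nonzero reals and `A = (−a, b, c)`, `B = (a, −b, c)`,
`C = (a, b, −c)`, `D = (−a, −b, −c)`, and let `P = (x, y, z)` be a point of the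
circumsphere of `ABCD` (so `x² + y² + z² = a² + b² + c²`) different from the vertices.
Let `S₁` be the circumcenter of triangle `ABP` (the point of the plane `ABP`
equidistant from `A`, `B`, `P`) and `S₂` the circumcenter of triangle `CDP`. Then the
tangent line at `P` of the circle `ABP` (the set of points of the plane `ABP` seen from
`P` orthogonally to `S₁ − P`) coincides with the tangent line at `P` of the circle
`CDP` if and only if `a·b·z + c·x·y = 0`. -/
theorem circles_tangent_iff_on_hyperbolic_paraboloid
    (a b c x y z : ℝ) (ha : a ≠ 0) (hb : b ≠ 0) (hc : c ≠ 0)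
    (A B C D P : Pt)
    (hA : A = ![-a, b, c]) (hB : B = ![a, -b, c])
    (hC : C = ![a, b, -c]) (hD : D = ![-a, -b, -c])
    (hP : P = ![x, y, z])
    (hsphere : x ^ 2 + y ^ 2 + z ^ 2 = a ^ 2 + b ^ 2 + c ^ 2)
    (hPv : P ∉ ({A, B, C, D} : Set Pt))
    (S₁ : Pt) (hS₁mem : S₁ ∈ affineSpan ℝ ({A, B, P} : Set Pt))
    (hS₁A : dist S₁ A = dist S₁ B) (hS₁P : dist S₁ A = dist S₁ P)
    (S₂ : Pt) (hS₂mem : S₂ ∈ affineSpan ℝ ({C, D, P} : Set Pt))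
    (hS₂C : dist S₂ C = dist S₂ D) (hS₂P : dist S₂ C = dist S₂ P) :
    {q : Pt | q ∈ affineSpan ℝ ({A, B, P} : Set Pt) ∧ ⟪q - P, S₁ - P⟫ = 0}
      = {q : Pt | q ∈ affineSpan ℝ ({C, D, P} : Set Pt) ∧ ⟪q - P, S₂ - P⟫ = 0}
    ↔ a * b * z + c * x * y = 0 := by

  simp only [Set.mem_insert_iff, Set.mem_singleton_iff] at hPv
  push_neg at hPv
  obtain ⟨hPA, hPB, hPC, hPD⟩ := hPv
  have hAA : ⟪ A, A⟫ = ⟪ P, P⟫ := by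
    rw [inner3, inner3]; simp [hA, hP]; linear_combination -hsphere
  have hBB : ⟪ B, B⟫ = ⟪ P, P⟫ := by
    rw [inner3, inner3]; simp [hB, hP]; linear_combination -hsphere
  have hCC : ⟪ C, C⟫ = ⟪ P, P⟫ := by
    rw [inner3, inner3]; simp [hC, hP]; linear_combination -hsphere
  have hDD : ⟪ D, D⟫ = ⟪ P, P⟫ := by
    rw [inner3, inner3]; simp [hD, hP]; linear_combination -hsphere
  have hS1A : ⟪ A - P, S₁⟫ = 0 := inner_sub_of_dist_eq hS₁P hAA
  have hS1B : ⟪ B - P, S₁⟫ = 0 := inner_sub_of_dist_eq (hS₁A.symm.trans hS₁P) hBB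
  have hS2C : ⟪ C - P, S₂⟫ = 0 := inner_sub_of_dist_eq hS₂P hCC
  have hS2D : ⟪ D - P, S₂⟫ = 0 := inner_sub_of_dist_eq (hS₂C.symm.trans hS₂P) hDD
  constructor
  · intro hEq
    have huP : ⟪ A - P, P⟫ = (-(a*x) + b*y + c*z - (x ^ 2 + y ^ 2 + z ^ 2)) := by
      rw [inner3]; simp [hA, hP, PiLp.sub_apply]; ring
    have hvP : ⟪ B - P, P⟫ = (a*x - b*y + c*z - (x ^ 2 + y ^ 2 + z ^ 2)) := by
      rw [inner3]; simp [hB, hP, PiLp.sub_apply]; ring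
    have hmem : P + ((-(a*x) + b*y + c*z - (x ^ 2 + y ^ 2 + z ^ 2)) • (B - P) - (a*x - b*y + c*z - (x ^ 2 + y ^ 2 + z ^ 2)) • (A - P)) ∈
        {q : Pt | q ∈ affineSpan ℝ ({A, B, P} : Set Pt) ∧ ⟪ q - P, S₁ - P⟫ = 0} := by
      refine ⟨(mem_span3 _ _ _ _).2 ⟨-(a*x - b*y + c*z - (x ^ 2 + y ^ 2 + z ^ 2)), (-(a*x) + b*y + c*z - (x ^ 2 + y ^ 2 + z ^ 2)), ?_⟩, ?_⟩
      · rw [add_sub_cancel_left]; module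
      · rw [add_sub_cancel_left, inner_sub_left, real_inner_smul_left, real_inner_smul_left,
          inner_sub_right, inner_sub_right, hS1A, hS1B, huP, hvP]
        ring
    rw [hEq] at hmem
    obtain ⟨hmem1, -⟩ := hmem
    obtain ⟨s, t, hst⟩ := (mem_span3 _ _ _ _).1 hmem1
    rw [add_sub_cancel_left] at hst
    have h0 := congrArg (fun v : Pt => v 0) hst
    have h1 := congrArg (fun v : Pt => v 1) hst
    have h2 := congrArg (fun v : Pt => v 2) hst
    simp only [PiLp.smul_apply, PiLp.add_apply, PiLp.sub_apply, smul_eq_mul, hA, hB, hC, hD, hP,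
      Matrix.cons_val_zero, Matrix.cons_val_one, Matrix.head_cons,
      Matrix.cons_val_two, Matrix.tail_cons] at h0 h1 h2
    have key : (a  ^  2 + b  ^  2) * (a * b * z + c * x * y) = 0 := by
      linear_combination (b*(z + c)/4) * h0 - (a*(z + c)/4) * h1 - ((b*x - a*y)/4) * h2
        - (a*b*z) * hsphere
    rcases mul_eq_zero.mp key with h | h
    · exact absurd h (by positivity)
    · exact h
  · intro hcond
    ext q
    simp only [Set.mem_setOf_eq]
    constructor
    · intro hq
      exact tangent_incl a b c x y z ha hsphere hcond A B C D P hA hB hC hD hP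
        hPA hPC hPD S₁ S₂ hS1A hS1B hS2C hS2D q hq.1 hq.2
    · intro hq
      have hres := tangent_incl a (-b) (-c) x y z ha (by linear_combination hsphere)
        (by linear_combination -hcond) D C B A P hD
        (by rw [neg_neg]; exact hC) (by rw [neg_neg]; exact hB)
        (by rw [neg_neg, neg_neg]; exact hA) hP hPD hPB hPA S₂ S₁
        hS2D hS2C hS1B hS1A q (by rw [Set.insert_comm]; exact hq.1) hq.2
      refine ⟨?_, hres.2⟩
      rw [Set.insert_comm]
      exact hres.1

end
end
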